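/- arXiv:2209.03598 — 7 statements merged into one kernel-verified Lean document; each statement's English description precedes it below -/
import Mathlib

section
/- Let A ⊆ B be an integral extension of commutative rings which is R-subintegral. Then the map sending a real prime ideal q of B to q ∩ A is a homeomorphism from the set of real prime ideals of B onto the set of real prime ideals of A, both equipped with the subspace topology induced by the Zariski topology on the prime spectrum. -/
/-- An ideal `I` of a commutative ring is *real* if whenever a finite sum of squares
of elements lies in `I`, then each of these elements lies in `I`. -/
def Ideal.IsRealIdeal {A : Type*} [CommRing A] (I : Ideal A) : Prop :=
  ∀ (n : ℕ) (a : Fin n → A), (∑ i, a i ^ 2) ∈ I → ∀ i, a i ∈ I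

/-- An integral extension `φ : A → B` is *R-subintegral* if for every real prime ideal `p`
of `A` there is exactly one prime ideal `q` of `B` lying over `p`, this `q` is a real ideal,
and the induced map of residue fields `κ(p) → κ(q)` is an isomorphism.  (The residue-field
isomorphism is expressed by its surjectivity: every `b : B` is congruent mod `q` to a
fraction `a/s` with `a s : A`, `s ∉ p`; injectivity is automatic for fields.) -/
def RSubintegral {A B : Type*} [CommRing A] [CommRing B] (φ : A →+* B) : Prop :=
  ∀ p : Ideal A, p.IsPrime → p.IsRealIdeal →
    (∃! q : Ideal B, q.IsPrime ∧ q.comap φ = p) ∧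
    ∀ q : Ideal B, q.IsPrime → q.comap φ = p →
      q.IsRealIdeal ∧ ∀ b : B, ∃ a s : A, s ∉ p ∧ φ s * b - φ a ∈ q

/-! By `RSubintegral`, a prime of `B` is real exactly when its contraction is, so the real
spectrum of `B` is the full preimage of that of `A` under `comap φ`. A closed map stays closed
when restricted over a preimage, so `comap φ`, closed for integral `φ`, restricts to a closed
continuous map of real spectra, which `RSubintegral` also makes bijective. -/

theorem IsClosedMap.subtype_map_of_iff {X Y : Type*} [TopologicalSpace X] [TopologicalSpace Y]
    {f : X → Y} (hf : IsClosedMap f) {p : X → Prop} {q : Y → Prop} (hpq : ∀ x, p x ↔ q (f x)) :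
    IsClosedMap (Subtype.map f fun x => (hpq x).1) :=
  (hf.restrictPreimage {y | q y}).comp ((Homeomorph.refl X).subtype hpq).isClosedMap

theorem Ideal.IsRealIdeal.comap {A B : Type*} [CommRing A] [CommRing B] (φ : A →+* B)
    {q : Ideal B} (hq : q.IsRealIdeal) : (q.comap φ).IsRealIdeal := fun n a ha =>
  hq n (fun i => φ (a i)) (by simpa only [Ideal.mem_comap, map_sum, map_pow] using ha)

namespace RSubintegral

variable {A B : Type*} [CommRing A] [CommRing B] {φ : A →+* B}

theorem exists_isPrime_comap_eq (hR : RSubintegral φ) {p : Ideal A} [p.IsPrime]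
    (hp : p.IsRealIdeal) : ∃ q : Ideal B, q.IsPrime ∧ q.comap φ = p :=
  (hR p ‹_› hp).1.exists

theorem isRealIdeal_of_comap (hR : RSubintegral φ) {q : Ideal B} [q.IsPrime]
    (hq : (q.comap φ).IsRealIdeal) : q.IsRealIdeal :=
  ((hR _ inferInstance hq).2 q ‹_› rfl).1

theorem eq_of_comap_eq (hR : RSubintegral φ) {q₁ q₂ : Ideal B} [q₁.IsPrime] [q₂.IsPrime]
    (hq₁ : (q₁.comap φ).IsRealIdeal) (h : q₁.comap φ = q₂.comap φ) : q₁ = q₂ :=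
  (hR _ inferInstance hq₁).1.unique ⟨‹_›, rfl⟩ ⟨‹_›, h.symm⟩

end RSubintegral

namespace PrimeSpectrum

variable {A B : Type*} [CommRing A] [CommRing B] (φ : A →+* B)

def realComap : {q : PrimeSpectrum B // q.asIdeal.IsRealIdeal} →
    {p : PrimeSpectrum A // p.asIdeal.IsRealIdeal} :=
  Subtype.map (comap φ) fun _ hq => hq.comap φ

theorem continuous_realComap : Continuous (realComap φ) :=
  (continuous_comap φ).subtype_map _

variable {φ}

theorem bijective_realComap (hR : RSubintegral φ) : Function.Bijective (realComap φ) := by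
  refine ⟨fun q₁ q₂ h => ?_, fun ⟨p, hp⟩ => ?_⟩
  · have h' : q₁.1.asIdeal.comap φ = q₂.1.asIdeal.comap φ := congrArg (·.1.asIdeal) h
    exact Subtype.ext (PrimeSpectrum.ext (hR.eq_of_comap_eq (q₁.2.comap φ) h'))
  · obtain ⟨q, hq, hqp⟩ := hR.exists_isPrime_comap_eq hp
    exact ⟨⟨⟨q, hq⟩, hR.isRealIdeal_of_comap (hqp ▸ hp)⟩, Subtype.ext (PrimeSpectrum.ext hqp)⟩

theorem isClosedMap_realComap (hint : φ.IsIntegral) (hR : RSubintegral φ) :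
    IsClosedMap (realComap φ) :=
  (isClosedMap_comap_of_isIntegral φ hint).subtype_map_of_iff fun _ =>
    ⟨fun hq => hq.comap φ, hR.isRealIdeal_of_comap⟩

end PrimeSpectrum

theorem rsubintegral_homeomorph_realSpec_general {A B : Type*} [CommRing A] [CommRing B]
    (φ : A →+* B) (hint : φ.IsIntegral)
    (hR : RSubintegral φ) :
    ∃ h : {q : PrimeSpectrum B // q.asIdeal.IsRealIdeal} ≃ₜ
          {p : PrimeSpectrum A // p.asIdeal.IsRealIdeal},
      ∀ q : {q : PrimeSpectrum B // q.asIdeal.IsRealIdeal},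
        (h q : PrimeSpectrum A) = PrimeSpectrum.comap φ q.1 :=
  ⟨(Equiv.ofBijective _ (PrimeSpectrum.bijective_realComap hR)).toHomeomorphOfContinuousClosed
      (PrimeSpectrum.continuous_realComap φ) (PrimeSpectrum.isClosedMap_realComap hint hR),
    fun _ => rfl⟩

/-- If `A ⊆ B` is an integral R-subintegral extension, then `q ↦ q ∩ A` is a homeomorphism
from the set of real prime ideals of `B` onto the set of real prime ideals of `A`, both with
the subspace topology induced by the Zariski topology on the prime spectrum. -/
theorem rsubintegral_homeomorph_realSpec {A B : Type*} [CommRing A] [CommRing B]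
    (φ : A →+* B) (hinj : Function.Injective φ) (hint : φ.IsIntegral)
    (hR : RSubintegral φ) :
    ∃ h : {q : PrimeSpectrum B // q.asIdeal.IsRealIdeal} ≃ₜ
          {p : PrimeSpectrum A // p.asIdeal.IsRealIdeal},
      ∀ q : {q : PrimeSpectrum B // q.asIdeal.IsRealIdeal},
        (h q : PrimeSpectrum A) = PrimeSpectrum.comap φ q.1 :=
  rsubintegral_homeomorph_realSpec_general φ hint hR
end

section
/- Let A ⊆ B be an integral extension of commutative rings. Then the extension A ⊆ A^{R+}_B is R-subintegral, where A^{R+}_B is the R-seminormalization of A in B. -/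
/-- The sum `S + I` of a subring and an ideal, as a subring. -/
def Subring.addIdeal {R : Type*} [CommRing R] (S : Subring R) (I : Ideal R) : Subring R where
  carrier := {x | ∃ s ∈ S, ∃ r ∈ I, x = s + r}
  zero_mem' := ⟨0, S.zero_mem, 0, I.zero_mem, by ring⟩
  one_mem' := ⟨1, S.one_mem, 0, I.zero_mem, by ring⟩
  add_mem' := by
    rintro x y ⟨s, hs, r, hr, rfl⟩ ⟨s', hs', r', hr', rfl⟩
    exact ⟨s + s', S.add_mem hs hs', r + r', I.add_mem hr hr', by ring⟩
  neg_mem' := by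
    rintro x ⟨s, hs, r, hr, rfl⟩
    exact ⟨-s, S.neg_mem hs, -r, I.neg_mem hr, by ring⟩
  mul_mem' := by
    rintro x y ⟨s, hs, r, hr, rfl⟩ ⟨s', hs', r', hr', rfl⟩
    exact ⟨s * s', S.mul_mem hs hs',
      s * r' + r * s' + r * r',
      I.add_mem (I.add_mem (I.mul_mem_left _ hr') (I.mul_mem_right _ hr)) (I.mul_mem_left _ hr'),
      by ring⟩

variable {A B : Type*} [CommRing A] [CommRing B]

/-- The canonical map `A_p → B_p`, where `B_p` denotes the localization of `B` at the
multiplicative set `φ(A ∖ p)`. -/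
noncomputable def locMap (φ : A →+* B) (p : Ideal A) [p.IsPrime] :
    Localization.AtPrime p →+* Localization (p.primeCompl.map φ) :=
  IsLocalization.map _ φ (Submonoid.le_comap_map p.primeCompl)

/-- The subring `A_p + Rad(B_p)` of `B_p`, where `A_p` is the image of the localization of
`A` at `p` and `Rad` is the Jacobson radical. -/
noncomputable def localCondSubring (φ : A →+* B) (p : Ideal A) [p.IsPrime] :
    Subring (Localization (p.primeCompl.map φ)) :=
  (locMap φ p).range.addIdeal ((⊥ : Ideal (Localization (p.primeCompl.map φ))).jacobson)

/-- The R-seminormalization `A^{R+}_B` of `A` in `B`: the elements `b : B` such that for every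
real prime ideal `p` of `A`, the image of `b` in `B_p` lies in `A_p + Rad(B_p)`. -/
noncomputable def RSemi (φ : A →+* B) : Subring B :=
  ⨅ p : {p : Ideal A // p.IsPrime ∧ p.IsRealIdeal},
    letI : p.1.IsPrime := p.2.1
    Subring.comap (algebraMap B (Localization (p.1.primeCompl.map φ))) (localCondSubring φ p.1)

lemma mem_RSemi_of_range (φ : A →+* B) (a : A) : φ a ∈ RSemi φ := by
  rw [RSemi, Subring.mem_iInf]
  intro p
  letI : p.1.IsPrime := p.2.1
  rw [Subring.mem_comap]
  refine ⟨locMap φ p.1 (algebraMap A (Localization.AtPrime p.1) a), ⟨_, rfl⟩,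
    0, Ideal.zero_mem _, ?_⟩
  rw [add_zero, locMap, IsLocalization.map_eq]

/-! Fix a real prime `p` of `A` and let `K ⊆ B` be the preimage of `Rad(B_p)`. By definition
of `A^{R+}_B`, each of its elements `x` satisfies `φ s * x - φ a ∈ K` for some `a` and `s ∉ p`.
A prime `Q` of `B` over `p` extends to a prime of `B_p` lying over the maximal ideal of `A_p`,
which is maximal since `A_p → B_p` is integral; hence `K ⊆ Q`, and by lying over for
`A^{R+}_B ⊆ B` every prime `q` of `A^{R+}_B` over `p` contains `K ∩ A^{R+}_B`. So modulo `q`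
every element is a fraction `a / s`: this makes `κ(p) → κ(q)` surjective, determines `q`, and,
after clearing denominators in a sum of squares, transfers realness from `p` to `q`. -/

theorem RingHom.IsIntegral.exists_isPrime_comap_eq {R S : Type*} [CommRing R] [CommRing S]
    {f : R →+* S} (hf : f.IsIntegral) (hinj : Function.Injective f) (P : Ideal R) [P.IsPrime] :
    ∃ Q : Ideal S, Q.IsPrime ∧ Q.comap f = P := by
  let _ : Algebra R S := f.toAlgebra
  have : Algebra.IsIntegral R S := ⟨hf⟩
  obtain ⟨Q, -, hQ, hQP⟩ := Ideal.exists_ideal_over_prime_of_isIntegral P (⊥ : Ideal S) <| by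
    rw [← RingHom.ker_eq_comap_bot, (RingHom.injective_iff_ker_eq_bot (algebraMap R S)).mp hinj]
    exact bot_le
  exact ⟨Q, hQ, hQP⟩

theorem comap_jacobson_bot_le_of_comap_eq {φ : A →+* B} (hint : φ.IsIntegral) {p : Ideal A}
    [p.IsPrime] (Q : Ideal B) [hQ : Q.IsPrime] (hQp : Q.comap φ = p) :
    (⊥ : Ideal (Localization (p.primeCompl.map φ))).jacobson.comap (algebraMap B _) ≤ Q := by
  have hdisj : Disjoint ((p.primeCompl.map φ : Submonoid B) : Set B) Q := by
    rw [Set.disjoint_left]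
    rintro _ ⟨s, hs, rfl⟩ hsQ
    exact hs (hQp ▸ hsQ)
  set Qₚ := Q.map (algebraMap B (Localization (p.primeCompl.map φ)))
  have : Qₚ.IsPrime := IsLocalization.isPrime_of_isPrime_disjoint _ _ Q hQ hdisj
  have hQₚ : Qₚ.comap (algebraMap B _) = Q :=
    IsLocalization.under_map_of_isPrime_disjoint _ _ hQ hdisj
  have hunder : (Qₚ.comap (locMap φ p)).comap (algebraMap A (Localization.AtPrime p)) = p := by
    rw [Ideal.comap_comap, locMap, IsLocalization.map_comp, ← Ideal.comap_comap, hQₚ, hQp]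
  have hmax : Qₚ.IsMaximal := by
    refine Ideal.isMaximal_of_isIntegral_of_isMaximal_comap' (locMap φ p)
      (isIntegral_localization' hint p.primeCompl) Qₚ ?_
    rw [Localization.AtPrime.eq_maximalIdeal_iff_under_eq.mp hunder]
    infer_instance
  rw [← hQₚ]
  exact Ideal.comap_mono (sInf_le ⟨bot_le, hmax⟩)

theorem exists_sub_mem_comap_jacobson_of_mem_rSemi {φ : A →+* B} {p : Ideal A} [hp : p.IsPrime]
    (hreal : p.IsRealIdeal) {x : B} (hx : x ∈ RSemi φ) :
    ∃ a s : A, s ∉ p ∧ φ s * x - φ a ∈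
      (⊥ : Ideal (Localization (p.primeCompl.map φ))).jacobson.comap (algebraMap B _) := by
  obtain ⟨_, ⟨z, rfl⟩, j, hj, hxj⟩ :=
    Subring.mem_comap.mp (Subring.mem_iInf.mp hx ⟨p, hp, hreal⟩)
  obtain ⟨⟨a, s⟩, rfl⟩ := IsLocalization.mk'_surjective p.primeCompl z
  have hspec : algebraMap B (Localization (p.primeCompl.map φ)) (φ s) *
      locMap φ p (IsLocalization.mk' (Localization.AtPrime p) a s) = algebraMap B _ (φ a) := by
    rw [locMap, IsLocalization.map_mk']
    exact IsLocalization.mk'_spec' (Localization (p.primeCompl.map φ)) _ _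
  refine ⟨a, s, s.2, ?_⟩
  have heq : algebraMap B (Localization (p.primeCompl.map φ)) (φ s * x - φ a) =
      algebraMap B _ (φ s) * j := by
    rw [map_sub, map_mul, hxj, mul_add, hspec]
    ring
  rw [Ideal.mem_comap, heq]
  exact Ideal.mul_mem_left _ _ hj

section ResidueField

variable {R S : Type*} [CommRing R] [CommRing S] {f : R →+* S} {p : Ideal R}

theorem Ideal.le_of_forall_exists_sub_mem {q q' K : Ideal S} [q'.IsPrime]
    (hq : q.comap f ≤ p) (hq' : q'.comap f = p) (hKq : K ≤ q) (hKq' : K ≤ q')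
    (h : ∀ x, ∃ a s : R, s ∉ p ∧ f s * x - f a ∈ K) : q ≤ q' := by
  intro x hx
  obtain ⟨a, s, hs, hK⟩ := h x
  have ha : a ∈ p := hq <| by
    simpa using q.sub_mem (q.mul_mem_left (f s) hx) (hKq hK)
  rw [← hq'] at ha hs
  have hsx : f s * x ∈ q' := by simpa using q'.add_mem (hKq' hK) ha
  exact (Ideal.IsPrime.mem_or_mem ‹_› hsx).resolve_left hs

theorem exists_common_sub_mem [p.IsPrime] {I : Ideal S}
    (h : ∀ x, ∃ a s : R, s ∉ p ∧ f s * x - f a ∈ I) {ι : Type*} [Fintype ι] (c : ι → S) :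
    ∃ (a : ι → R) (s : R), s ∉ p ∧ ∀ i, f s * c i - f (a i) ∈ I := by
  classical
  choose a s hs hI using fun i => h (c i)
  refine ⟨fun i => a i * ∏ j ∈ Finset.univ.erase i, s j, ∏ j, s j,
    Submonoid.prod_mem p.primeCompl fun j _ => hs j, fun i => ?_⟩
  have hfactor : f (∏ j, s j) * c i - f (a i * ∏ j ∈ Finset.univ.erase i, s j) =
      f (∏ j ∈ Finset.univ.erase i, s j) * (f (s i) * c i - f (a i)) := by
    rw [← Finset.mul_prod_erase Finset.univ s (Finset.mem_univ i), map_mul, map_mul]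
    ring
  rw [hfactor]
  exact I.mul_mem_left _ (hI i)

theorem Ideal.IsRealIdeal.of_forall_exists_sub_mem [p.IsPrime] (hp : p.IsRealIdeal)
    {q : Ideal S} [q.IsPrime] (hq : q.comap f = p)
    (h : ∀ x, ∃ a s : R, s ∉ p ∧ f s * x - f a ∈ q) : q.IsRealIdeal := by
  intro n c hc i
  obtain ⟨a, s, hs, ha⟩ := exists_common_sub_mem h c
  let π := Ideal.Quotient.mk q
  have hπ : ∀ i, π (f s) * π (c i) = π (f (a i)) := fun i => by
    rw [← map_mul, Ideal.Quotient.eq]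
    exact ha i
  have hmem_iff : ∀ r : R, π (f r) = 0 ↔ r ∈ p := fun r => by
    rw [Ideal.Quotient.eq_zero_iff_mem, ← Ideal.mem_comap, hq]
  have hsum : ∑ i, a i ^ 2 ∈ p := by
    rw [← hmem_iff]
    calc π (f (∑ i, a i ^ 2)) = ∑ i, (π (f s) * π (c i)) ^ 2 := by
          simp only [map_sum, map_pow, hπ]
      _ = π (f s) ^ 2 * π (∑ i, c i ^ 2) := by
          simp only [map_sum, map_pow, mul_pow, Finset.mul_sum]
      _ = 0 := by rw [Ideal.Quotient.eq_zero_iff_mem.mpr hc, mul_zero]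
  have hsc : π (f s) * π (c i) = 0 := by rw [hπ, hmem_iff]; exact hp n a hsum i
  exact Ideal.Quotient.eq_zero_iff_mem.mp
    ((mul_eq_zero.mp hsc).resolve_left fun h => hs ((hmem_iff s).mp h))

end ResidueField

/-- For an integral extension `A ⊆ B`, the extension `A ⊆ A^{R+}_B` of `A` in its
R-seminormalization in `B` is R-subintegral. -/
theorem rSubintegral_rSemi (φ : A →+* B) (hinj : Function.Injective φ)
    (hint : φ.IsIntegral) :
    RSubintegral (φ.codRestrict (RSemi φ) (mem_RSemi_of_range φ)) := by
  set ψ := φ.codRestrict (RSemi φ) (mem_RSemi_of_range φ)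
  intro p hp hreal
  set K := ((⊥ : Ideal (Localization (p.primeCompl.map φ))).jacobson.comap
    (algebraMap B _)).comap (RSemi φ).subtype
  have hK : ∀ q : Ideal (RSemi φ), q.IsPrime → q.comap ψ = p → K ≤ q := by
    intro q hq hqp
    obtain ⟨Q, hQ, rfl⟩ := (hint.tower_top ψ (RSemi φ).subtype).exists_isPrime_comap_eq
      Subtype.val_injective q
    exact Ideal.comap_mono (comap_jacobson_bot_le_of_comap_eq hint Q hqp)
  have hres : ∀ x : RSemi φ, ∃ a s : A, s ∉ p ∧ ψ s * x - ψ a ∈ K :=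
    fun x => exists_sub_mem_comap_jacobson_of_mem_rSemi hreal x.2
  obtain ⟨Q, hQ, hQp⟩ := hint.exists_isPrime_comap_eq hinj p
  have hq₀ : (Q.comap (RSemi φ).subtype).IsPrime := inferInstance
  refine ⟨⟨Q.comap (RSemi φ).subtype, ⟨hq₀, hQp⟩, fun q ⟨hq, hqp⟩ => ?_⟩,
    fun q hq hqp => ?_⟩
  · exact le_antisymm
      (Ideal.le_of_forall_exists_sub_mem hqp.le hQp (hK q hq hqp) (hK _ hq₀ hQp) hres)
      (Ideal.le_of_forall_exists_sub_mem hQp.le hqp (hK _ hq₀ hQp) (hK q hq hqp) hres)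
  · have hresq : ∀ x, ∃ a s : A, s ∉ p ∧ ψ s * x - ψ a ∈ q := fun x =>
      let ⟨a, s, hs, hx⟩ := hres x
      ⟨a, s, hs, hK q hq hqp hx⟩
    exact ⟨hreal.of_forall_exists_sub_mem hqp hresq, hresq⟩
end

section
/- Let A ⊆ C ⊆ B be integral extensions of commutative rings. Then the extension A ⊆ B is R-subintegral if and only if both extensions A ⊆ C and C ⊆ B are R-subintegral. -/
/-- Lying over: an injective integral ring hom admits a prime over any prime. -/
lemma RSub.exists_prime_over {C B : Type*} [CommRing C] [CommRing B] (ψ : C →+* B)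
    (hinj : Function.Injective ψ) (hint : ψ.IsIntegral) (q : Ideal C) (hq : q.IsPrime) :
    ∃ Q : Ideal B, Q.IsPrime ∧ Q.comap ψ = q := by
  letI := ψ.toAlgebra
  haveI : Algebra.IsIntegral C B := Algebra.isIntegral_def.mpr hint
  haveI := hq
  have hker : RingHom.ker (algebraMap C B) ≤ q := by
    have : Function.Injective (algebraMap C B) := hinj
    rw [(RingHom.injective_iff_ker_eq_bot _).mp this]
    exact bot_le
  obtain ⟨Q, _, hQp, hQc⟩ := Ideal.exists_ideal_over_prime_of_isIntegral q (⊥ : Ideal B)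
    (by rw [← RingHom.ker_eq_comap_bot]; exact hker)
  exact ⟨Q, hQp, hQc⟩

/-- The comap of a real ideal is real. -/
lemma RSub.comap_isRealIdeal {A B : Type*} [CommRing A] [CommRing B] (f : A →+* B)
    {I : Ideal B} (h : I.IsRealIdeal) : (I.comap f).IsRealIdeal := by
  intro n a ha i
  have h1 : (∑ i, (f (a i)) ^ 2) ∈ I := by
    have := Ideal.mem_comap.mp ha
    simpa [map_sum, map_pow] using this
  exact h n (fun i => f (a i)) h1 i

/-- For integral extensions `A ⊆ C ⊆ B`, the extension `A ⊆ B` is R-subintegral iff both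
`A ⊆ C` and `C ⊆ B` are R-subintegral. -/
theorem rSubintegral_comp_iff {A C B : Type*} [CommRing A] [CommRing C] [CommRing B]
    (φ : A →+* C) (ψ : C →+* B)
    (hφinj : Function.Injective φ) (hψinj : Function.Injective ψ)
    (hφint : φ.IsIntegral) (hψint : ψ.IsIntegral) :
    RSubintegral (ψ.comp φ) ↔ RSubintegral φ ∧ RSubintegral ψ := by
  constructor
  · intro H
    constructor
    · -- RSubintegral φ
      intro p hp hpr
      obtain ⟨⟨Q, ⟨hQp, hQc⟩, hQuniq⟩, hQprop⟩ := H p hp hpr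
      have hq : (Q.comap ψ).IsPrime := by haveI := hQp; infer_instance
      have hqc : (Q.comap ψ).comap φ = p := by rw [Ideal.comap_comap]; exact hQc
      refine ⟨⟨Q.comap ψ, ⟨hq, hqc⟩, ?_⟩, ?_⟩
      · rintro q' ⟨hq', hq'c⟩
        obtain ⟨Q', hQ'p, hQ'c⟩ := RSub.exists_prime_over ψ hψinj hψint q' hq'
        have hEq : Q' = Q := hQuniq Q' ⟨hQ'p, by rw [← Ideal.comap_comap, hQ'c, hq'c]⟩
        rw [← hQ'c, hEq]
      · intro q' hq' hq'c
        obtain ⟨Q', hQ'p, hQ'c⟩ := RSub.exists_prime_over ψ hψinj hψint q' hq'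
        have hQ'over : Q'.comap (ψ.comp φ) = p := by rw [← Ideal.comap_comap, hQ'c, hq'c]
        obtain ⟨hQ'real, hQ'surj⟩ := hQprop Q' hQ'p hQ'over
        constructor
        · rw [← hQ'c]; exact RSub.comap_isRealIdeal ψ hQ'real
        · intro c
          obtain ⟨a, s, hs, hmem⟩ := hQ'surj (ψ c)
          refine ⟨a, s, hs, ?_⟩
          rw [← hQ'c, Ideal.mem_comap]
          simpa [map_sub, map_mul, RingHom.comp_apply] using hmem
    · -- RSubintegral ψ
      intro q hq hqr
      have hp : (q.comap φ).IsPrime := by haveI := hq; infer_instance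
      have hpr : (q.comap φ).IsRealIdeal := RSub.comap_isRealIdeal φ hqr
      obtain ⟨⟨Q, ⟨hQp, hQc⟩, hQuniq⟩, hQprop⟩ := H (q.comap φ) hp hpr
      obtain ⟨Q', hQ'p, hQ'c⟩ := RSub.exists_prime_over ψ hψinj hψint q hq
      have hQ'eq : Q' = Q := hQuniq Q' ⟨hQ'p, by rw [← Ideal.comap_comap, hQ'c]⟩
      have hQoverq : Q.comap ψ = q := by rw [← hQ'eq]; exact hQ'c
      refine ⟨⟨Q, ⟨hQp, hQoverq⟩, ?_⟩, ?_⟩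
      · rintro Q'' ⟨hQ''p, hQ''c⟩
        exact hQuniq Q'' ⟨hQ''p, by rw [← Ideal.comap_comap, hQ''c]⟩
      · intro Q'' hQ''p hQ''c
        have hover : Q''.comap (ψ.comp φ) = q.comap φ := by rw [← Ideal.comap_comap, hQ''c]
        obtain ⟨hreal, hsurj⟩ := hQprop Q'' hQ''p hover
        refine ⟨hreal, fun b => ?_⟩
        obtain ⟨a, s, hs, hmem⟩ := hsurj b
        refine ⟨φ a, φ s, fun h => hs (Ideal.mem_comap.mpr h), ?_⟩
        simpa [RingHom.comp_apply] using hmem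
  · rintro ⟨Hφ, Hψ⟩
    intro p hp hpr
    obtain ⟨⟨q, ⟨hq, hqc⟩, hquniq⟩, hqprop⟩ := Hφ p hp hpr
    obtain ⟨hqreal, hqsurj⟩ := hqprop q hq hqc
    obtain ⟨⟨Q, ⟨hQp, hQc⟩, hQuniq⟩, hQprop⟩ := Hψ q hq hqreal
    have hQover : Q.comap (ψ.comp φ) = p := by rw [← Ideal.comap_comap, hQc, hqc]
    refine ⟨⟨Q, ⟨hQp, hQover⟩, ?_⟩, ?_⟩
    · rintro Q' ⟨hQ'p, hQ'c⟩
      have hq' : (Q'.comap ψ).IsPrime := by haveI := hQ'p; infer_instance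
      have h1 : Q'.comap ψ = q := hquniq _ ⟨hq', by rw [Ideal.comap_comap]; exact hQ'c⟩
      exact hQuniq Q' ⟨hQ'p, h1⟩
    · intro Q' hQ'p hQ'c
      have hq'p : (Q'.comap ψ).IsPrime := by haveI := hQ'p; infer_instance
      have hq'c : Q'.comap ψ = q := hquniq _ ⟨hq'p, by rw [Ideal.comap_comap]; exact hQ'c⟩
      obtain ⟨hQ'real, hQ'surj⟩ := hQprop Q' hQ'p hq'c
      refine ⟨hQ'real, fun b => ?_⟩
      obtain ⟨c, t, ht, h2⟩ := hQ'surj b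
      obtain ⟨a₁, s₁, hs₁, h3⟩ := hqsurj c
      obtain ⟨a₂, s₂, hs₂, h1⟩ := hqsurj t
      have hφs₂ : φ s₂ ∉ q := fun h => hs₂ (hqc ▸ Ideal.mem_comap.mpr h)
      have hst : φ s₂ * t ∉ q := fun h => (hq.mem_or_mem h).elim hφs₂ ht
      have ha₂q : φ a₂ ∉ q := fun h => hst (by have := q.add_mem h1 h; simpa using this)
      have ha₂ : a₂ ∉ p := fun h => ha₂q (by rw [← hqc] at h; exact Ideal.mem_comap.mp h)
      have m1 : ψ (φ s₂) * ψ t - ψ (φ a₂) ∈ Q' := by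
        have : φ s₂ * t - φ a₂ ∈ Q'.comap ψ := hq'c ▸ h1
        simpa [map_sub, map_mul] using Ideal.mem_comap.mp this
      have m3 : ψ (φ s₁) * ψ c - ψ (φ a₁) ∈ Q' := by
        have : φ s₁ * c - φ a₁ ∈ Q'.comap ψ := hq'c ▸ h3
        simpa [map_sub, map_mul] using Ideal.mem_comap.mp this
      refine ⟨s₂ * a₁, s₁ * a₂, fun h => (hp.mem_or_mem h).elim hs₁ ha₂, ?_⟩
      have key : (ψ.comp φ) (s₁ * a₂) * b - (ψ.comp φ) (s₂ * a₁) =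
          (-(ψ (φ s₁) * b)) * (ψ (φ s₂) * ψ t - ψ (φ a₂)) +
          (ψ (φ s₁) * ψ (φ s₂)) * (ψ t * b - ψ c) +
          ψ (φ s₂) * (ψ (φ s₁) * ψ c - ψ (φ a₁)) := by
        simp only [RingHom.comp_apply, map_mul]; ring
      rw [key]
      exact add_mem (add_mem (Q'.mul_mem_left _ m1) (Q'.mul_mem_left _ h2))
        (Q'.mul_mem_left _ m3)
end

section
/- Let A ⊆ C ⊆ B be integral extensions of commutative rings. Then the extension A ⊆ C is R-subintegral if and only if C is contained in the R-seminormalization A^{R+}_B of A in B. (Universal property of the R-seminormalization: A^{R+}_B is the biggest R-subintegral subextension of A ⊆ B.) -/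
variable {A B : Type*} [CommRing A] [CommRing B]

/-!
By integrality, the maximal ideals of `B_p` are exactly the extensions of the primes of `B` lying
over `p`, so `b ∈ A^{R+}_B` says: for every real prime `p` of `A` a single fraction `a / s`,
`s ∉ p`, satisfies `s b ≡ a` modulo every prime of `B` over `p`. By lying over for `C ⊆ B` this
condition on `ψ c` is the same condition on `c` in `C`. For `A ⊆ C` it is R-subintegrality:
a fraction that works modulo two primes over `p` forces them to contain each other, it gives
surjectivity of `κ(p) → κ(q)`, and after clearing denominators a sum of squares in `q` becomes one
in `p`, which makes `q` real.
-/

def IsFractionModPrimesOver (φ : A →+* B) (p : Ideal A) (b : B) : Prop :=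
  ∃ a s : A, s ∉ p ∧ ∀ q : Ideal B, q.IsPrime → q.comap φ = p → φ s * b - φ a ∈ q

section Localization

variable (φ : A →+* B) (p : Ideal A) [p.IsPrime]

lemma locMap_comp_algebraMap :
    (locMap φ p).comp (algebraMap A (Localization.AtPrime p)) =
      (algebraMap B (Localization (p.primeCompl.map φ))).comp φ :=
  IsLocalization.map_comp _

lemma locMap_algebraMap (a : A) :
    locMap φ p (algebraMap A (Localization.AtPrime p) a) =
      algebraMap B (Localization (p.primeCompl.map φ)) (φ a) :=
  IsLocalization.map_eq _ _

lemma locMap_isIntegral (hφ : φ.IsIntegral) : (locMap φ p).IsIntegral :=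
  isIntegral_localization' hφ p.primeCompl

lemma algebraMap_mul_sub_locMap_mk' (b : B) (a s : A) (hs : s ∈ p.primeCompl) :
    algebraMap B (Localization (p.primeCompl.map φ)) (φ s) *
        (algebraMap B _ b - locMap φ p (IsLocalization.mk' (Localization.AtPrime p) a ⟨s, hs⟩)) =
      algebraMap B _ (φ s * b - φ a) := by
  have h := congrArg (locMap φ p) (IsLocalization.mk'_spec' (Localization.AtPrime p) a ⟨s, hs⟩)
  rw [map_mul, locMap_algebraMap, locMap_algebraMap] at h
  rw [mul_sub, h, map_sub, map_mul]

lemma comap_comap_algebraMap_of_isMaximal (hφ : φ.IsIntegral)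
    (m : Ideal (Localization (p.primeCompl.map φ))) (hm : m.IsMaximal) :
    (m.comap (algebraMap B _)).comap φ = p := by
  have : (m.comap (locMap φ p)).IsMaximal :=
    Ideal.isMaximal_comap_of_isIntegral_of_isMaximal' _ (locMap_isIntegral φ p hφ) m
  rw [Ideal.comap_comap, ← locMap_comp_algebraMap, ← Ideal.comap_comap,
    IsLocalRing.eq_maximalIdeal this]
  exact IsLocalization.AtPrime.under_maximalIdeal _ p

lemma exists_isMaximal_comap_algebraMap_eq (hφ : φ.IsIntegral) {Q : Ideal B} (hQ : Q.IsPrime)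
    (hQp : Q.comap φ = p) :
    ∃ m : Ideal (Localization (p.primeCompl.map φ)), m.IsMaximal ∧ m.comap (algebraMap B _) = Q := by
  have hdisj : Disjoint ((p.primeCompl.map φ : Submonoid B) : Set B) Q := by
    rw [Set.disjoint_left]
    rintro _ ⟨s, hs, rfl⟩ hsQ
    exact hs (hQp ▸ hsQ)
  set m := Q.map (algebraMap B (Localization (p.primeCompl.map φ)))
  have hm : m.IsPrime := IsLocalization.isPrime_of_isPrime_disjoint _ _ Q hQ hdisj
  have hmQ : m.comap (algebraMap B _) = Q :=
    IsLocalization.under_map_of_isPrime_disjoint _ _ hQ hdisj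
  have hmax : (m.comap (locMap φ p)).IsMaximal := by
    have hle : IsLocalRing.maximalIdeal _ ≤ m.comap (locMap φ p) := by
      rw [← Localization.AtPrime.map_eq_maximalIdeal, Ideal.map_le_iff_le_comap,
        Ideal.comap_comap, locMap_comp_algebraMap, ← Ideal.comap_comap, hmQ, hQp]
    rw [← (IsLocalRing.maximalIdeal.isMaximal _).eq_of_le (Ideal.comap_isPrime _ m).ne_top hle]
    exact IsLocalRing.maximalIdeal.isMaximal _
  exact ⟨m, Ideal.isMaximal_of_isIntegral_of_isMaximal_comap' _
    (locMap_isIntegral φ p hφ) m hmax, hmQ⟩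

lemma algebraMap_mem_jacobson_bot_iff (hφ : φ.IsIntegral) (b : B) :
    algebraMap B (Localization (p.primeCompl.map φ)) b ∈ (⊥ : Ideal _).jacobson ↔
      ∀ Q : Ideal B, Q.IsPrime → Q.comap φ = p → b ∈ Q := by
  rw [Ideal.jacobson, Ideal.mem_sInf]
  constructor
  · intro hb Q hQ hQp
    obtain ⟨m, hm, rfl⟩ := exists_isMaximal_comap_algebraMap_eq φ p hφ hQ hQp
    exact hb ⟨bot_le, hm⟩
  · rintro hb m ⟨-, hm⟩
    have := hm.isPrime
    exact hb _ (Ideal.comap_isPrime _ m) (comap_comap_algebraMap_of_isMaximal φ p hφ m hm)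

lemma algebraMap_mem_localCondSubring_iff (b : B) :
    algebraMap B (Localization (p.primeCompl.map φ)) b ∈ localCondSubring φ p ↔
      ∃ a s : A, s ∉ p ∧ algebraMap B (Localization (p.primeCompl.map φ)) (φ s * b - φ a) ∈
        (⊥ : Ideal (Localization (p.primeCompl.map φ))).jacobson := by
  constructor
  · rintro ⟨_, ⟨α, rfl⟩, r, hr, hb⟩
    obtain ⟨⟨a, s, hs⟩, rfl⟩ := IsLocalization.mk'_surjective p.primeCompl α
    refine ⟨a, s, hs, ?_⟩
    rw [← algebraMap_mul_sub_locMap_mk' φ p b a s hs, hb, add_sub_cancel_left]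
    exact Ideal.mul_mem_left _ _ hr
  · rintro ⟨a, s, hs, hb⟩
    have hunit : IsUnit (algebraMap B (Localization (p.primeCompl.map φ)) (φ s)) :=
      IsLocalization.map_units _ (⟨φ s, s, hs, rfl⟩ : p.primeCompl.map φ)
    refine ⟨_, ⟨IsLocalization.mk' _ a (⟨s, hs⟩ : p.primeCompl), rfl⟩, _, ?_,
      (add_sub_cancel _ _).symm⟩
    rwa [← Ideal.unit_mul_mem_iff_mem _ hunit, algebraMap_mul_sub_locMap_mk' φ p b a s hs]

lemma algebraMap_mem_localCondSubring_iff_isFractionModPrimesOver (hφ : φ.IsIntegral) (b : B) :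
    algebraMap B (Localization (p.primeCompl.map φ)) b ∈ localCondSubring φ p ↔
      IsFractionModPrimesOver φ p b := by
  simp_rw [algebraMap_mem_localCondSubring_iff, algebraMap_mem_jacobson_bot_iff φ p hφ]
  rfl

end Localization

theorem mem_RSemi_iff (φ : A →+* B) (hφ : φ.IsIntegral) (b : B) :
    b ∈ RSemi φ ↔ ∀ p : Ideal A, p.IsPrime → p.IsRealIdeal → IsFractionModPrimesOver φ p b := by
  rw [RSemi, Subring.mem_iInf, Subtype.forall]
  refine forall_congr' fun p => ⟨fun h hp hreal => ?_, fun h ⟨hp, hreal⟩ => ?_⟩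
  · exact (algebraMap_mem_localCondSubring_iff_isFractionModPrimesOver φ p hφ b).1 (h ⟨hp, hreal⟩)
  · exact (algebraMap_mem_localCondSubring_iff_isFractionModPrimesOver φ p hφ b).2 (h hp hreal)

section Tower

variable {C : Type*} [CommRing C]

lemma forall_mem_of_comap_comp_eq_iff {ψ : C →+* B} (hψinj : Function.Injective ψ)
    (hψint : ψ.IsIntegral) (φ : A →+* C) (p : Ideal A) (c : C) :
    (∀ Q : Ideal B, Q.IsPrime → Q.comap (ψ.comp φ) = p → ψ c ∈ Q) ↔
      ∀ q : Ideal C, q.IsPrime → q.comap φ = p → c ∈ q := by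
  constructor
  · intro h q hq hqp
    obtain ⟨⟨Q, hQ⟩, hQq⟩ := hψint.comap_surjective hψinj ⟨q, hq⟩
    have hQq : Q.comap ψ = q := congrArg PrimeSpectrum.asIdeal hQq
    exact hQq ▸ h Q hQ (by rw [← Ideal.comap_comap, hQq, hqp])
  · intro h Q hQ hQp
    exact h (Q.comap ψ) (Ideal.comap_isPrime ψ Q) (by rw [Ideal.comap_comap, hQp])

lemma isFractionModPrimesOver_comp_iff {ψ : C →+* B} (hψinj : Function.Injective ψ)
    (hψint : ψ.IsIntegral) (φ : A →+* C) (p : Ideal A) (c : C) :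
    IsFractionModPrimesOver (ψ.comp φ) p (ψ c) ↔ IsFractionModPrimesOver φ p c := by
  have h (a s : A) : ψ.comp φ s * ψ c - ψ.comp φ a = ψ (φ s * c - φ a) := by
    simp only [RingHom.comp_apply, map_sub, map_mul]
  simp_rw [IsFractionModPrimesOver, h, forall_mem_of_comap_comp_eq_iff hψinj hψint]

end Tower

section Subintegral

variable {φ : A →+* B} {p : Ideal A}

lemma le_of_forall_isFractionModPrimesOver (h : ∀ b, IsFractionModPrimesOver φ p b)
    {q₁ q₂ : Ideal B} (hq₁ : q₁.IsPrime) (hq₂ : q₂.IsPrime) (hq₁p : q₁.comap φ = p)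
    (hq₂p : q₂.comap φ = p) : q₁ ≤ q₂ := by
  intro b hb
  obtain ⟨a, s, hs, hsa⟩ := h b
  have ha : a ∈ p := by
    rw [← hq₁p, Ideal.mem_comap, ← sub_sub_cancel (φ s * b) (φ a)]
    exact q₁.sub_mem (q₁.mul_mem_left _ hb) (hsa q₁ hq₁ hq₁p)
  have hsb : φ s * b ∈ q₂ := by
    rw [← sub_add_cancel (φ s * b) (φ a)]
    exact q₂.add_mem (hsa q₂ hq₂ hq₂p) (by rwa [← hq₂p] at ha)
  exact (hq₂.mem_or_mem hsb).resolve_left fun hs' => hs (hq₂p ▸ hs')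

lemma exists_common_denominator [p.IsPrime] {q : Ideal B} {n : ℕ} (b : Fin n → B)
    (h : ∀ i, ∃ a s : A, s ∉ p ∧ φ s * b i - φ a ∈ q) :
    ∃ s ∉ p, ∃ t : Fin n → A, ∀ i, φ s * b i - φ (t i) ∈ q := by
  choose a s hs hsa using h
  refine ⟨∏ i, s i, p.primeCompl.prod_mem fun i _ => hs i,
    fun i => a i * ∏ j ∈ Finset.univ.erase i, s j, fun i => ?_⟩
  have e : φ (∏ j, s j) * b i - φ (a i * ∏ j ∈ Finset.univ.erase i, s j) =
      φ (∏ j ∈ Finset.univ.erase i, s j) * (φ (s i) * b i - φ (a i)) := by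
    rw [← Finset.mul_prod_erase Finset.univ s (Finset.mem_univ i)]
    simp only [map_mul]
    ring
  rw [e]
  exact q.mul_mem_left _ (hsa i)

lemma isRealIdeal_of_forall_exists_sub_mem (hp : p.IsRealIdeal) {q : Ideal B} [q.IsPrime]
    (hqp : q.comap φ = p) (h : ∀ b : B, ∃ a s : A, s ∉ p ∧ φ s * b - φ a ∈ q) :
    q.IsRealIdeal := by
  subst hqp
  intro n b hsum i
  obtain ⟨s, hs, t, hst⟩ := exists_common_denominator b fun i => h (b i)
  replace hst : ∀ i, Ideal.Quotient.mk q (φ s * b i) = Ideal.Quotient.mk q (φ (t i)) :=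
    fun i => Ideal.Quotient.eq.mpr (hst i)
  have ht : ∑ j, t j ^ 2 ∈ q.comap φ := by
    rw [Ideal.mem_comap, ← Ideal.Quotient.eq_zero_iff_mem]
    calc Ideal.Quotient.mk q (φ (∑ j, t j ^ 2))
        = Ideal.Quotient.mk q (∑ j, (φ s * b j) ^ 2) := by simp only [map_sum, map_pow, hst]
      _ = Ideal.Quotient.mk q (φ s ^ 2 * ∑ j, b j ^ 2) := by
          rw [Finset.mul_sum]; simp_rw [mul_pow]
      _ = 0 := Ideal.Quotient.eq_zero_iff_mem.mpr (q.mul_mem_left _ hsum)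
  have hsb : φ s * b i ∈ q := by
    rw [← Ideal.Quotient.eq_zero_iff_mem, hst, Ideal.Quotient.eq_zero_iff_mem]
    exact hp n t ht i
  exact (Ideal.IsPrime.mem_or_mem ‹_› hsb).resolve_left hs

theorem rSubintegral_iff_forall_isFractionModPrimesOver (hinj : Function.Injective φ)
    (hint : φ.IsIntegral) :
    RSubintegral φ ↔
      ∀ p : Ideal A, p.IsPrime → p.IsRealIdeal → ∀ b, IsFractionModPrimesOver φ p b := by
  refine forall₃_congr fun p hp hreal => ⟨?_, fun h => ?_⟩
  · rintro ⟨⟨q, ⟨hq, hqp⟩, huniq⟩, hres⟩ b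
    obtain ⟨a, s, hs, hsa⟩ := (hres q hq hqp).2 b
    exact ⟨a, s, hs, fun q' hq' hq'p => huniq q' ⟨hq', hq'p⟩ ▸ hsa⟩
  · have hres (q : Ideal B) (hq : q.IsPrime) (hqp : q.comap φ = p) (b : B) :
        ∃ a s : A, s ∉ p ∧ φ s * b - φ a ∈ q :=
      let ⟨a, s, hs, hsa⟩ := h b
      ⟨a, s, hs, hsa q hq hqp⟩
    obtain ⟨⟨q, hq⟩, hqp⟩ := hint.comap_surjective hinj ⟨p, hp⟩
    have hqp : q.comap φ = p := congrArg PrimeSpectrum.asIdeal hqp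
    refine ⟨⟨q, ⟨hq, hqp⟩, fun q' ⟨hq', hq'p⟩ => le_antisymm ?_ ?_⟩, fun q' hq' hq'p =>
      ⟨isRealIdeal_of_forall_exists_sub_mem hreal hq'p (hres q' hq' hq'p), hres q' hq' hq'p⟩⟩
    · exact le_of_forall_isFractionModPrimesOver h hq' hq hq'p hqp
    · exact le_of_forall_isFractionModPrimesOver h hq hq' hqp hq'p

end Subintegral

/-- Universal property of the R-seminormalization: for integral extensions `A ⊆ C ⊆ B`,
the extension `A ⊆ C` is R-subintegral iff (the image of) `C` is contained in the
R-seminormalization `A^{R+}_B` of `A` in `B`. -/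
theorem rSubintegral_iff_le_rSemi {A C B : Type*} [CommRing A] [CommRing C] [CommRing B]
    (φ : A →+* C) (ψ : C →+* B)
    (hφinj : Function.Injective φ) (hψinj : Function.Injective ψ)
    (hφint : φ.IsIntegral) (hψint : ψ.IsIntegral) :
    RSubintegral φ ↔ ∀ c : C, ψ c ∈ RSemi (ψ.comp φ) := by
  have hχint : (ψ.comp φ).IsIntegral := RingHom.IsIntegral.trans φ ψ hφint hψint
  rw [rSubintegral_iff_forall_isFractionModPrimesOver hφinj hφint]
  simp_rw [mem_RSemi_iff _ hχint, isFractionModPrimesOver_comp_iff hψinj hψint]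
  exact ⟨fun h c p hp hreal => h p hp hreal c, fun h p hp hreal c => h c p hp hreal⟩
end

section
/- Let π* : ℝ[X] → ℝ[Y] be an injective ℝ-algebra homomorphism between real affine rings making ℝ[Y] a finite ℝ[X]-module. Then the following are equivalent: (i) π* is Rmax-subintegral; (ii) for every ℝ-algebra homomorphism φ : ℝ[X] → ℝ there exists a unique ℝ-algebra homomorphism ψ : ℝ[Y] → ℂ with ψ ∘ π* = ι ∘ φ; (iii) the map ψ ↦ ψ ∘ π* is a bijection from the set of ℝ-algebra homomorphisms ℝ[Y] → ℝ onto the set of ℝ-algebra homomorphisms ℝ[X] → ℝ, and every ℝ-algebra homomorphism ψ : ℝ[Y] → ℂ such that ψ ∘ π* takes values in ℝ ⊆ ℂ itself takes values in ℝ ⊆ ℂ. -/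
/-- An integral extension `φ : A → B` is *Rmax-subintegral* if for every real maximal ideal
`m` of `A` there is exactly one prime ideal `q` of `B` lying over `m`, this `q` is a real
maximal ideal, and the induced map of residue fields `κ(m) → κ(q)` is an isomorphism
(expressed via surjectivity, as in `RSubintegral`). -/
def RmaxSubintegral {A B : Type*} [CommRing A] [CommRing B] (φ : A →+* B) : Prop :=
  ∀ m : Ideal A, m.IsMaximal → m.IsRealIdeal →
    (∃! q : Ideal B, q.IsPrime ∧ q.comap φ = m) ∧
    ∀ q : Ideal B, q.IsPrime → q.comap φ = m →
      q.IsMaximal ∧ q.IsRealIdeal ∧ ∀ b : B, ∃ a s : A, s ∉ m ∧ φ s * b - φ a ∈ q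

/-!
Real maximal ideals of `A` are exactly the kernels of real points `φ : A → ℝ`, and every maximal
ideal of `B` is the kernel of a complex point `B → ℂ` (Nullstellensatz); a complex point lies over `φ`
iff its kernel lies over `ker φ`. So if `π` is Rmax-subintegral, all complex points over `φ` share
the unique prime `q` over `ker φ` as kernel, and the isomorphism `κ(ker φ) ≅ κ(q)` makes them
agree. Conversely, if the complex point over `φ` is unique it equals its complex conjugate, hence
is real; its kernel is then a real maximal ideal with residue field `ℝ`, and every prime over
`ker φ` (maximal, by integrality) is this kernel. The same conjugation argument gives (ii) ⇔ (iii).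
-/

section

variable {A B : Type*} [CommRing A] [CommRing B]

theorem RingHom.ker_isRealIdeal {R F : Type*} [CommRing R] [LinearOrder R] [IsStrictOrderedRing R]
    [FunLike F A R] [RingHomClass F A R] (f : F) : (RingHom.ker f).IsRealIdeal := by
  intro n a h i
  have hsum : ∑ j, f (a j) * f (a j) = 0 := by simpa [sq] using h
  exact (Finset.sum_mul_self_eq_zero_iff _ _).1 hsum i (Finset.mem_univ i)

theorem RingHom.eq_of_forall_exists_mul_sub_mem {R S K : Type*} [CommRing R] [CommRing S]
    [CommRing K] [IsDomain K] (π : R →+* S) {ψ₁ ψ₂ : S →+* K} (q : Ideal S)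
    (h₁ : q ≤ RingHom.ker ψ₁) (h₂ : q ≤ RingHom.ker ψ₂) (h : ψ₁.comp π = ψ₂.comp π)
    (hres : ∀ b, ∃ a s, ψ₁ (π s) ≠ 0 ∧ π s * b - π a ∈ q) : ψ₁ = ψ₂ := by
  ext b
  obtain ⟨a, s, hs, hmem⟩ := hres b
  have e₁ := h₁ hmem
  have e₂ := h₂ hmem
  simp only [RingHom.mem_ker, map_sub, map_mul, sub_eq_zero] at e₁ e₂
  have hπ : ∀ x, ψ₁ (π x) = ψ₂ (π x) := RingHom.congr_fun h
  rw [hπ, hπ] at e₁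
  rw [hπ] at hs
  exact mul_left_cancel₀ hs (e₁.trans e₂.symm)

variable {k K : Type*} [Field k] [Field K] [Algebra k K] [Algebra k A] [Algebra k B]

theorem AlgHom.ker_isMaximal (φ : A →ₐ[k] k) : (RingHom.ker φ).IsMaximal :=
  RingHom.ker_isMaximal_of_surjective φ fun r => ⟨algebraMap k A r, by simp⟩

theorem AlgHom.comap_ker_eq_ker_iff (π : A →ₐ[k] B) (ψ : B →ₐ[k] K) (φ : A →ₐ[k] k) :
    (RingHom.ker ψ).comap π = RingHom.ker φ ↔ ∀ a, ψ (π a) = algebraMap k K (φ a) := by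
  constructor
  · intro h a
    have : a - algebraMap k A (φ a) ∈ (RingHom.ker ψ).comap π := by
      rw [h, RingHom.mem_ker, map_sub, AlgHom.commutes, Algebra.algebraMap_self_apply, sub_self]
    simpa [sub_eq_zero] using this
  · intro h
    ext a
    simp [h]

theorem exists_algHom_ker_eq [IsAlgClosed K] [Algebra.FiniteType k B] (q : Ideal B)
    [q.IsMaximal] : ∃ ψ : B →ₐ[k] K, RingHom.ker ψ = q := by
  let := Ideal.Quotient.field q
  have : Module.Finite k (B ⧸ q) := finite_of_finite_type_of_isJacobsonRing k _
  refine ⟨(IsAlgClosed.lift : B ⧸ q →ₐ[k] K).comp (Ideal.Quotient.mkₐ k q), ?_⟩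
  exact (RingHom.ker_comp_of_injective (Ideal.Quotient.mkₐ k q : B →+* B ⧸ q)
    (RingHom.injective (IsAlgClosed.lift : B ⧸ q →ₐ[k] K).toRingHom)).trans
    (Ideal.Quotient.mkₐ_ker k q)

section Real

variable [Algebra ℝ A] [Algebra ℝ B]

theorem AlgHom.exists_ofRealAm_comp_eq_iff (ψ : B →ₐ[ℝ] ℂ) :
    (∃ ψ' : B →ₐ[ℝ] ℝ, Complex.ofRealAm.comp ψ' = ψ) ↔ ∀ b, ∃ r : ℝ, ψ b = r := by
  refine ⟨fun ⟨ψ', hψ'⟩ b => ⟨ψ' b, by simp [← hψ']⟩, fun h => ?_⟩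
  refine ⟨AlgHom.ofLinearMap (Complex.reLm ∘ₗ ψ.toLinearMap) (by simp) fun x y => ?_, ?_⟩
  · obtain ⟨r, hr⟩ := h x
    obtain ⟨s, hs⟩ := h y
    simp [hr, hs]
  · ext b
    obtain ⟨r, hr⟩ := h b
    simp [hr]

theorem AlgHom.exists_ofRealAm_comp_eq_of_conj_comp_eq (ψ : B →ₐ[ℝ] ℂ)
    (h : Complex.conjAe.toAlgHom.comp ψ = ψ) :
    ∃ ψ' : B →ₐ[ℝ] ℝ, Complex.ofRealAm.comp ψ' = ψ :=
  ψ.exists_ofRealAm_comp_eq_iff.2 fun b => Complex.conj_eq_iff_real.1 (AlgHom.congr_fun h b)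

theorem AlgHom.exists_ofRealAm_comp_eq_of_isRealIdeal (ψ : A →ₐ[ℝ] ℂ)
    (h : (RingHom.ker ψ).IsRealIdeal) : ∃ φ : A →ₐ[ℝ] ℝ, Complex.ofRealAm.comp φ = ψ := by
  refine ψ.exists_ofRealAm_comp_eq_iff.2 fun a => ⟨(ψ a).re, ?_⟩
  set z := ψ a
  have hsq : (∑ i, ![a - algebraMap ℝ A z.re, algebraMap ℝ A z.im] i ^ 2) ∈ RingHom.ker ψ := by
    rw [RingHom.mem_ker, Fin.sum_univ_two]
    simp only [Matrix.cons_val_zero, Matrix.cons_val_one, map_add, map_pow, map_sub,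
      AlgHom.commutes, Complex.coe_algebraMap]
    linear_combination (-(z - z.re + z.im * Complex.I)) * Complex.re_add_im z +
      (z.im : ℂ) ^ 2 * Complex.I_sq
  have him := h 2 _ hsq 1
  simp only [Matrix.cons_val_one, Matrix.cons_val_fin_one, RingHom.mem_ker, AlgHom.commutes,
    Complex.coe_algebraMap, Complex.ofReal_eq_zero] at him
  exact Complex.ext rfl (by simp [him])

theorem exists_algHom_real_ker_eq [Algebra.FiniteType ℝ A] (m : Ideal A) [m.IsMaximal]
    (hm : m.IsRealIdeal) : ∃ φ : A →ₐ[ℝ] ℝ, RingHom.ker φ = m := by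
  obtain ⟨ψ, rfl⟩ := exists_algHom_ker_eq (k := ℝ) (K := ℂ) m
  obtain ⟨φ, rfl⟩ := ψ.exists_ofRealAm_comp_eq_of_isRealIdeal hm
  exact ⟨φ, (RingHom.ker_comp_of_injective (φ : A →+* ℝ) Complex.ofReal_injective).symm⟩

theorem existsUnique_lift_of_rmaxSubintegral [Algebra.FiniteType ℝ B] (π : A →ₐ[ℝ] B)
    (H : RmaxSubintegral π.toRingHom) (φ : A →ₐ[ℝ] ℝ) :
    ∃! ψ : B →ₐ[ℝ] ℂ, ∀ a, ψ (π a) = φ a := by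
  obtain ⟨⟨q, ⟨hq, hqφ⟩, hq_unique⟩, hfiber⟩ := H _ φ.ker_isMaximal (RingHom.ker_isRealIdeal φ)
  obtain ⟨hqmax, -, hres⟩ := hfiber q hq hqφ
  have lies_over_iff (ψ : B →ₐ[ℝ] ℂ) : (∀ a, ψ (π a) = φ a) ↔ RingHom.ker ψ = q :=
    (π.comap_ker_eq_ker_iff ψ φ).symm.trans
      ⟨fun h => hq_unique _ ⟨RingHom.ker_isPrime ψ, h⟩, fun h => h ▸ hqφ⟩
  obtain ⟨ψ, hψ⟩ := exists_algHom_ker_eq (k := ℝ) (K := ℂ) q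
  have hψφ := (lies_over_iff ψ).2 hψ
  refine ⟨ψ, hψφ, fun ψ' hψ'φ => AlgHom.coe_ringHom_injective ?_⟩
  refine RingHom.eq_of_forall_exists_mul_sub_mem π.toRingHom q ((lies_over_iff ψ').1 hψ'φ).ge
    hψ.ge ?_ fun b => ?_
  · ext a
    simp [hψφ, hψ'φ]
  · obtain ⟨a, s, hs, hmem⟩ := hres b
    refine ⟨a, s, ?_, hmem⟩
    simpa [hψ'φ] using hs

theorem exists_ofRealAm_comp_eq_of_existsUnique (π : A →ₐ[ℝ] B) {φ : A →ₐ[ℝ] ℝ}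
    (H : ∃! ψ : B →ₐ[ℝ] ℂ, ∀ a, ψ (π a) = φ a) {ψ : B →ₐ[ℝ] ℂ} (hψ : ∀ a, ψ (π a) = φ a) :
    ∃ ψ' : B →ₐ[ℝ] ℝ, Complex.ofRealAm.comp ψ' = ψ :=
  ψ.exists_ofRealAm_comp_eq_of_conj_comp_eq (H.unique (fun a => by simp [hψ]) hψ)

theorem rmaxSubintegral_of_existsUnique_lift [Algebra.FiniteType ℝ A] [Algebra.FiniteType ℝ B]
    (π : A →ₐ[ℝ] B) (hπ : π.toRingHom.IsIntegral)
    (H : ∀ φ : A →ₐ[ℝ] ℝ, ∃! ψ : B →ₐ[ℝ] ℂ, ∀ a, ψ (π a) = φ a) :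
    RmaxSubintegral π.toRingHom := by
  intro m hm hm_real
  obtain ⟨φ, rfl⟩ := exists_algHom_real_ker_eq m hm_real
  obtain ⟨ψ, hψφ, hψ_unique⟩ := H φ
  have hfiber (q : Ideal B) (hq : q.IsPrime) (hqφ : q.comap π.toRingHom = RingHom.ker φ) :
      q = RingHom.ker ψ := by
    have := Ideal.isMaximal_of_isIntegral_of_isMaximal_comap' _ hπ q (hqφ ▸ hm)
    obtain ⟨ψ', rfl⟩ := exists_algHom_ker_eq (k := ℝ) (K := ℂ) q
    rw [hψ_unique ψ' ((π.comap_ker_eq_ker_iff ψ' φ).1 hqφ)]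
  obtain ⟨ψ', rfl⟩ := exists_ofRealAm_comp_eq_of_existsUnique π (H φ) hψφ
  have hker : RingHom.ker (Complex.ofRealAm.comp ψ') = RingHom.ker ψ' :=
    RingHom.ker_comp_of_injective (ψ' : B →+* ℝ) Complex.ofReal_injective
  refine ⟨⟨_, ⟨RingHom.ker_isPrime _, (π.comap_ker_eq_ker_iff _ φ).2 hψφ⟩,
    fun q ⟨hq, hqφ⟩ => hfiber q hq hqφ⟩, fun q hq hqφ => ?_⟩
  obtain rfl := hfiber q hq hqφ
  rw [hker]
  refine ⟨ψ'.ker_isMaximal, RingHom.ker_isRealIdeal ψ',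
    fun b => ⟨algebraMap ℝ A (ψ' b), 1, ?_, ?_⟩⟩
  · simp
  · simp [RingHom.mem_ker]

theorem existsUnique_lift_iff (π : A →ₐ[ℝ] B) :
    (∀ φ : A →ₐ[ℝ] ℝ, ∃! ψ : B →ₐ[ℝ] ℂ, ∀ a, ψ (π a) = φ a) ↔
      (Function.Bijective (fun ψ : B →ₐ[ℝ] ℝ => ψ.comp π) ∧
        ∀ ψ : B →ₐ[ℝ] ℂ, (∀ a, ∃ r : ℝ, ψ (π a) = r) → ∀ b, ∃ r : ℝ, ψ b = r) := by
  constructor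
  · intro H
    refine ⟨⟨fun ψ₁ ψ₂ h => ?_, fun φ => ?_⟩, fun ψ hψ => ?_⟩
    · refine (AlgHom.cancel_left (f := Complex.ofRealAm) Complex.ofReal_injective).1 ?_
      exact (H (ψ₁.comp π)).unique (fun a => rfl) fun a => by
        simpa using (AlgHom.congr_fun h a).symm
    · obtain ⟨ψ, hψ, -⟩ := H φ
      obtain ⟨ψ', rfl⟩ := exists_ofRealAm_comp_eq_of_existsUnique π (H φ) hψ
      exact ⟨ψ', AlgHom.ext fun a => by simpa using hψ a⟩
    · obtain ⟨φ, hφ⟩ := (ψ.comp π).exists_ofRealAm_comp_eq_iff.2 hψ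
      refine ψ.exists_ofRealAm_comp_eq_iff.1 ?_
      exact exists_ofRealAm_comp_eq_of_existsUnique π (H φ) fun a => (AlgHom.congr_fun hφ a).symm
  · rintro ⟨⟨hinj, hsurj⟩, hreal⟩ φ
    obtain ⟨ψ, rfl⟩ := hsurj φ
    refine ⟨Complex.ofRealAm.comp ψ, fun a => rfl, fun ψ' hψ' => ?_⟩
    obtain ⟨ψ'', rfl⟩ := ψ'.exists_ofRealAm_comp_eq_iff.2 (hreal ψ' fun a => ⟨_, hψ' a⟩)
    rw [hinj (a₁ := ψ'') (AlgHom.ext fun a => by simpa using hψ' a)]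

end Real

end

theorem rmaxSubintegral_iff_points_general
    {A B : Type*} [CommRing A] [CommRing B] [Algebra ℝ A] [Algebra ℝ B]
    [Algebra.FiniteType ℝ A] [Algebra.FiniteType ℝ B]
    (π : A →ₐ[ℝ] B) (hfin : π.toRingHom.Finite) :
    (RmaxSubintegral π.toRingHom ↔
      ∀ φ : A →ₐ[ℝ] ℝ, ∃! ψ : B →ₐ[ℝ] ℂ, ∀ a : A, ψ (π a) = (φ a : ℂ)) ∧
    (RmaxSubintegral π.toRingHom ↔
      (Function.Bijective (fun ψ : B →ₐ[ℝ] ℝ => ψ.comp π) ∧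
        ∀ ψ : B →ₐ[ℝ] ℂ, (∀ a : A, ∃ r : ℝ, ψ (π a) = (r : ℂ)) →
          ∀ b : B, ∃ r : ℝ, ψ b = (r : ℂ))) := by
  have key : RmaxSubintegral π.toRingHom ↔
      ∀ φ : A →ₐ[ℝ] ℝ, ∃! ψ : B →ₐ[ℝ] ℂ, ∀ a, ψ (π a) = φ a :=
    ⟨existsUnique_lift_of_rmaxSubintegral π,
      rmaxSubintegral_of_existsUnique_lift π hfin.to_isIntegral⟩
  exact ⟨key, key.trans (existsUnique_lift_iff π)⟩

/-- For an injective finite ℝ-algebra homomorphism `π : ℝ[X] → ℝ[Y]` between real affine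
rings, the following are equivalent: (i) `π` is Rmax-subintegral; (ii) over each real closed
point of `X` (ℝ-algebra homomorphism `ℝ[X] → ℝ`) there is exactly one complex closed point
of `Y` (ℝ-algebra homomorphism `ℝ[Y] → ℂ`); (iii) `ψ ↦ ψ ∘ π` is a bijection on real closed
points, and every complex closed point of `Y` lying over a real closed point of `X` is real. -/
theorem rmaxSubintegral_iff_points
    {A B : Type*} [CommRing A] [CommRing B] [Algebra ℝ A] [Algebra ℝ B]
    [Algebra.FiniteType ℝ A] [Algebra.FiniteType ℝ B] [IsReduced A] [IsReduced B]
    (hA : (⊥ : Ideal A).IsRealIdeal) (hB : (⊥ : Ideal B).IsRealIdeal)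
    (π : A →ₐ[ℝ] B) (hinj : Function.Injective π) (hfin : π.toRingHom.Finite) :
    (RmaxSubintegral π.toRingHom ↔
      ∀ φ : A →ₐ[ℝ] ℝ, ∃! ψ : B →ₐ[ℝ] ℂ, ∀ a : A, ψ (π a) = (φ a : ℂ)) ∧
    (RmaxSubintegral π.toRingHom ↔
      (Function.Bijective (fun ψ : B →ₐ[ℝ] ℝ => ψ.comp π) ∧
        ∀ ψ : B →ₐ[ℝ] ℂ, (∀ a : A, ∃ r : ℝ, ψ (π a) = (r : ℂ)) →
          ∀ b : B, ∃ r : ℝ, ψ b = (r : ℂ))) :=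
  rmaxSubintegral_iff_points_general π hfin
end

section
/- Let X be an irreducible real affine variety with coordinate ring A = ℝ[x_1,...,x_n]/I, I a real prime ideal. Then every function f ∈ K^{R+}(X(ℝ)) is continuous on X(ℝ) for the Euclidean topology induced from ℝ^n. -/
variable {A B : Type*} [CommRing A] [CommRing B]

set_option synthInstance.maxHeartbeats 1000000

/-- The coordinate ring `ℝ[x_1,…,x_n]/I`. -/
abbrev CoordRing (n : ℕ) (I : Ideal (MvPolynomial (Fin n) ℝ)) :=
  MvPolynomial (Fin n) ℝ ⧸ I

/-- The real points `X(ℝ)` of the variety defined by `I`. -/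
def XR (n : ℕ) (I : Ideal (MvPolynomial (Fin n) ℝ)) : Set (Fin n → ℝ) :=
  {x | ∀ p ∈ I, MvPolynomial.eval x p = 0}

/-- The complex points `X(ℂ)` of the variety defined by `I`. -/
def XC (n : ℕ) (I : Ideal (MvPolynomial (Fin n) ℝ)) : Set (Fin n → ℂ) :=
  {z | ∀ p ∈ I, MvPolynomial.eval₂ Complex.ofRealHom z p = 0}

/-- Evaluation of the coordinate ring at a real point. -/
noncomputable def evR {n : ℕ} {I : Ideal (MvPolynomial (Fin n) ℝ)} {x : Fin n → ℝ}
    (hx : x ∈ XR n I) : CoordRing n I →+* ℝ :=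
  Ideal.Quotient.lift I (MvPolynomial.eval x) (fun p hp => hx p hp)

/-- Evaluation of the coordinate ring at a complex point. -/
noncomputable def evC {n : ℕ} {I : Ideal (MvPolynomial (Fin n) ℝ)} {z : Fin n → ℂ}
    (hz : z ∈ XC n I) : CoordRing n I →+* ℂ :=
  Ideal.Quotient.lift I (MvPolynomial.eval₂Hom Complex.ofRealHom z) (fun p hp => hz p hp)

/-- Complexification `ℝⁿ ⊆ ℂⁿ` of a point. -/
def cx {n : ℕ} (x : Fin n → ℝ) : Fin n → ℂ := fun i => (x i : ℂ)

lemma cx_mem {n : ℕ} {I : Ideal (MvPolynomial (Fin n) ℝ)} {x : Fin n → ℝ}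
    (hx : x ∈ XR n I) : cx x ∈ XC n I := by
  intro p hp
  have h2 := MvPolynomial.eval₂_comp_left Complex.ofRealHom (RingHom.id ℝ) x p
  rw [RingHom.comp_id] at h2
  have hx0 : MvPolynomial.eval₂ (RingHom.id ℝ) x p = 0 := hx p hp
  have hcx : (⇑Complex.ofRealHom ∘ x) = cx x := rfl
  rw [hcx, hx0, map_zero] at h2
  exact h2.symm

/-- The ring `K^{R+}(X(ℝ))` of functions on `X(ℝ)` which become polynomial on the
R-seminormalization: `f` is in it iff there is `g ∈ A^{R+}` (inside the integral closure `A'`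
of the coordinate ring `A` in its fraction field `K`) with `ψ(g) = f(x)` for every real point
`x` and every ℝ-algebra homomorphism `ψ : A' → ℂ` lying over the evaluation at `x`. -/
def KRplus (n : ℕ) (I : Ideal (MvPolynomial (Fin n) ℝ)) (K : Type*) [Field K]
    [Algebra (CoordRing n I) K] [IsFractionRing (CoordRing n I) K]
    [Algebra ℝ K] [IsScalarTower ℝ (CoordRing n I) K]
    (f : ↥(XR n I) → ℝ) : Prop :=
  ∃ g ∈ RSemi (algebraMap (CoordRing n I) ↥(integralClosure (CoordRing n I) K)),
    ∀ (x : Fin n → ℝ) (hx : x ∈ XR n I)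
      (ψ : ↥(integralClosure (CoordRing n I) K) →ₐ[ℝ] ℂ),
      (∀ a : CoordRing n I,
        ψ (algebraMap (CoordRing n I) ↥(integralClosure (CoordRing n I) K) a) = (evR hx a : ℂ)) →
      ψ g = (f ⟨x, hx⟩ : ℂ)

set_option linter.unusedSectionVars false
set_option linter.unusedSectionVars false
section
variable (n : ℕ) (I : Ideal (MvPolynomial (Fin n) ℝ)) [I.IsPrime]
  (K : Type*) [Field K] [Algebra (CoordRing n I) K] [IsFractionRing (CoordRing n I) K]
  [Algebra ℝ K] [IsScalarTower ℝ (CoordRing n I) K]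




noncomputable example : Algebra ℝ ↥(integralClosure (CoordRing n I) K) := inferInstance
example : Algebra.IsIntegral (CoordRing n I) ↥(integralClosure (CoordRing n I) K) := inferInstance

lemma evR_algebraMap {x : Fin n → ℝ} (hx : x ∈ XR n I) (c : ℝ) :
    evR hx (algebraMap ℝ (CoordRing n I) c) = c := by
  have : algebraMap ℝ (CoordRing n I) c = Ideal.Quotient.mk I (MvPolynomial.C c) := rfl
  rw [this, evR, Ideal.Quotient.lift_mk, MvPolynomial.eval_C]

lemma evR_surjective {x : Fin n → ℝ} (hx : x ∈ XR n I) :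
    Function.Surjective (evR hx) :=
  fun c => ⟨algebraMap ℝ (CoordRing n I) c, evR_algebraMap n I hx c⟩

lemma continuous_evR (c : CoordRing n I) :
    Continuous fun ξ : ↥(XR n I) => evR ξ.2 c := by
  obtain ⟨p, rfl⟩ := Ideal.Quotient.mk_surjective c
  have : (fun ξ : ↥(XR n I) => evR ξ.2 (Ideal.Quotient.mk I p))
      = fun ξ => MvPolynomial.eval ξ.1 p := rfl
  rw [this]
  exact (MvPolynomial.continuous_eval p).comp continuous_subtype_val

lemma algebraMap_real_B (c : ℝ) :
    algebraMap ℝ ↥(integralClosure (CoordRing n I) K) c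
      = algebraMap (CoordRing n I) ↥(integralClosure (CoordRing n I) K)
          (algebraMap ℝ (CoordRing n I) c) := by
  apply Subtype.ext
  show algebraMap ℝ K c = algebraMap (CoordRing n I) K (algebraMap ℝ (CoordRing n I) c)
  rw [IsScalarTower.algebraMap_apply ℝ (CoordRing n I) K]

lemma phi_injective : Function.Injective
    (algebraMap (CoordRing n I) ↥(integralClosure (CoordRing n I) K)) := by
  intro a b h
  exact IsFractionRing.injective (CoordRing n I) K (congrArg Subtype.val h)


set_option maxHeartbeats 1000000
lemma ker_evR_isMaximal {x : Fin n → ℝ} (hx : x ∈ XR n I) :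
    (RingHom.ker (evR hx)).IsMaximal :=
  RingHom.ker_isMaximal_of_surjective _ (evR_surjective n I hx)

lemma ker_evR_isReal {x : Fin n → ℝ} (hx : x ∈ XR n I) :
    (RingHom.ker (evR hx)).IsRealIdeal := by
  intro k a hsum i
  rw [RingHom.mem_ker] at hsum ⊢
  rw [map_sum] at hsum
  simp only [map_pow] at hsum
  have h0 : ∀ j ∈ Finset.univ, (0:ℝ) ≤ evR hx (a j) ^ 2 := fun j _ => sq_nonneg _
  have := (Finset.sum_eq_zero_iff_of_nonneg h0).1 hsum i (Finset.mem_univ i)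
  exact (pow_eq_zero_iff two_ne_zero).1 this

lemma exists_psi {x : Fin n → ℝ} (hx : x ∈ XR n I) :
    ∃ ψ : ↥(integralClosure (CoordRing n I) K) →ₐ[ℝ] ℂ,
      ∀ a : CoordRing n I,
        ψ (algebraMap (CoordRing n I) ↥(integralClosure (CoordRing n I) K) a) = (evR hx a : ℂ) := by
  set A' := CoordRing n I
  set B' := ↥(integralClosure (CoordRing n I) K)
  letI : CommRing B' := inferInstanceAs (CommRing ↥(integralClosure (CoordRing n I) K))
  set φ := algebraMap A' B'
  set m : Ideal A' := RingHom.ker (evR hx) with hm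
  haveI : m.IsMaximal := ker_evR_isMaximal n I hx
  have hker : RingHom.ker φ ≤ m := by
    rw [(RingHom.injective_iff_ker_eq_bot φ).1 (phi_injective n I K)]
    exact bot_le
  have hex : ∃ Q : Ideal B', Q.IsMaximal ∧ Q.comap φ = m := Ideal.exists_ideal_over_maximal_of_isIntegral (S := B') m hker
  obtain ⟨q, hqmax, hqcomap⟩ := hex
  haveI := hqmax
  -- key congruence
  have key : ∀ a : A', Ideal.Quotient.mk q (φ a)
      = algebraMap ℝ (B' ⧸ q) (evR hx a) := by
    intro a
    have hmem : a - algebraMap ℝ A' (evR hx a) ∈ m := by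
      rw [hm, RingHom.mem_ker, map_sub, evR_algebraMap n I hx, sub_self]
    have hq : φ (a - algebraMap ℝ A' (evR hx a)) ∈ q := by
      rw [← hqcomap] at hmem; exact hmem
    rw [map_sub] at hq
    have : Ideal.Quotient.mk q (φ a - φ (algebraMap ℝ A' (evR hx a))) = 0 :=
      Ideal.Quotient.eq_zero_iff_mem.2 hq
    rw [map_sub, sub_eq_zero] at this
    rw [this, ← algebraMap_real_B n I K, Ideal.Quotient.mk_algebraMap]
  haveI : NoZeroSMulDivisors ℝ (B' ⧸ q) :=
    inferInstance
  haveI : Algebra.IsAlgebraic ℝ (B' ⧸ q) := by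
    constructor
    intro y
    obtain ⟨b, rfl⟩ := Ideal.Quotient.mk_surjective y
    have hb : IsIntegral A' b := integralClosure.isIntegral (R := A') (A := K) b
    obtain ⟨p, hpm, hpe⟩ := hb
    refine (IsIntegral.isAlgebraic ⟨p.map (evR hx), hpm.map _, ?_⟩)
    have hcomp : (algebraMap ℝ (B' ⧸ q)).comp (evR hx) = (Ideal.Quotient.mk q).comp φ := by
      refine RingHom.ext fun a => (key a).symm
    rw [Polynomial.eval₂_map, hcomp, ← Polynomial.hom_eval₂, hpe, map_zero]
  let χ : (B' ⧸ q) →ₐ[ℝ] ℂ := IsAlgClosed.lift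
  refine ⟨χ.comp (Ideal.Quotient.mkₐ ℝ q), fun a => ?_⟩
  show χ (Ideal.Quotient.mkₐ ℝ q (φ a)) = _
  have : Ideal.Quotient.mkₐ ℝ q (φ a) = algebraMap ℝ (B' ⧸ q) (evR hx a) := key a
  rw [this]
  have := χ.commutes (evR hx a)
  rw [this]
  rfl
lemma root_bound (d : ℕ) (c : ℕ → ℂ) (z : ℂ)
    (h : z ^ d = -∑ i ∈ Finset.range d, c i * z ^ i) :
    ‖z‖ ≤ max 1 (∑ i ∈ Finset.range d, ‖c i‖) := by
  rcases le_or_gt ‖z‖ 1 with hz | hz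
  · exact le_max_of_le_left hz
  · refine le_max_of_le_right ?_
    rcases d with _ | e
    · simp at h
    · have h1 : ‖z‖ ^ (e + 1) ≤ (∑ i ∈ Finset.range (e+1), ‖c i‖) * ‖z‖ ^ e := by
        calc ‖z‖ ^ (e+1) = ‖z ^ (e+1)‖ := (norm_pow z (e+1)).symm
          _ = ‖∑ i ∈ Finset.range (e+1), c i * z ^ i‖ := by rw [h, norm_neg]
          _ ≤ ∑ i ∈ Finset.range (e+1), ‖c i * z ^ i‖ := norm_sum_le _ _
          _ ≤ ∑ i ∈ Finset.range (e+1), ‖c i‖ * ‖z‖ ^ e := by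
              refine Finset.sum_le_sum fun i hi => ?_
              rw [norm_mul, norm_pow]
              refine mul_le_mul_of_nonneg_left ?_ (norm_nonneg _)
              exact pow_le_pow_right₀ hz.le (Nat.lt_succ_iff.1 (Finset.mem_range.1 hi))
          _ = (∑ i ∈ Finset.range (e+1), ‖c i‖) * ‖z‖ ^ e := by rw [Finset.sum_mul]
      have hpos : (0:ℝ) < ‖z‖ ^ e := pow_pos (lt_trans one_pos hz) e
      have h2 : ‖z‖ ^ (e+1) = ‖z‖ ^ e * ‖z‖ := by ring
      rw [h2, mul_comm ((∑ i ∈ Finset.range (e+1), ‖c i‖)) (‖z‖ ^ e)] at h1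
      exact le_of_mul_le_mul_left h1 hpos

lemma psi_bound (b : ↥(integralClosure (CoordRing n I) K)) :
    ∃ C : ↥(XR n I) → ℝ, Continuous C ∧
      ∀ (x : Fin n → ℝ) (hx : x ∈ XR n I)
        (ψ : ↥(integralClosure (CoordRing n I) K) →ₐ[ℝ] ℂ),
        (∀ a : CoordRing n I,
          ψ (algebraMap (CoordRing n I) ↥(integralClosure (CoordRing n I) K) a) = (evR hx a : ℂ)) →
        ‖ψ b‖ ≤ C ⟨x, hx⟩ := by
  obtain ⟨p, hpm, hpe⟩ :=
    integralClosure.isIntegral (R := CoordRing n I) (A := K) b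
  refine ⟨fun ξ => max 1 (∑ i ∈ Finset.range p.natDegree, |evR ξ.2 (p.coeff i)|), ?_, ?_⟩
  · refine Continuous.max continuous_const ?_
    exact continuous_finset_sum _ fun i _ => (continuous_evR n I (p.coeff i)).abs
  · intro x hx ψ hψ
    have h0 : Polynomial.eval₂
        ((ψ : ↥(integralClosure (CoordRing n I) K) →+* ℂ).comp
          (algebraMap (CoordRing n I) ↥(integralClosure (CoordRing n I) K)))
        ((ψ : ↥(integralClosure (CoordRing n I) K) →+* ℂ) b) p = 0 := by
      rw [← Polynomial.hom_eval₂, hpe, map_zero]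
    rw [Polynomial.eval₂_eq_sum_range, Finset.sum_range_succ] at h0
    rw [show ((ψ : ↥(integralClosure (CoordRing n I) K) →+* ℂ).comp
          (algebraMap (CoordRing n I) ↥(integralClosure (CoordRing n I) K)))
          (p.coeff p.natDegree) = 1 by rw [hpm.coeff_natDegree, map_one], one_mul] at h0
    have hzd : ((ψ : ↥(integralClosure (CoordRing n I) K) →+* ℂ) b) ^ p.natDegree
        = -∑ i ∈ Finset.range p.natDegree,
            ((ψ : ↥(integralClosure (CoordRing n I) K) →+* ℂ).comp
              (algebraMap (CoordRing n I) ↥(integralClosure (CoordRing n I) K)))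
              (p.coeff i) * ((ψ : ↥(integralClosure (CoordRing n I) K) →+* ℂ) b) ^ i := by
      rw [eq_neg_iff_add_eq_zero, ← h0]; ring_nf
    refine le_trans (root_bound _ _ _ hzd) ?_
    apply max_le_max le_rfl
    refine le_of_eq (Finset.sum_congr rfl fun i _ => ?_)
    show ‖ψ (algebraMap (CoordRing n I) ↥(integralClosure (CoordRing n I) K) (p.coeff i))‖ = _
    rw [hψ (p.coeff i), Complex.norm_real, Real.norm_eq_abs]
end

lemma key_generic {A B : Type*} [CommRing A] [CommRing B] (φ : A →+* B)
    (hφint : φ.IsIntegral) (g : B) (hg : g ∈ RSemi φ)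
    (m : Ideal A) (hm : m.IsMaximal) (hreal : m.IsRealIdeal) :
    ∃ (a s w : A) (M : ℕ) (c : B →₀ B) (μ : B → A),
      s ∉ m ∧ w ∉ m ∧ (∀ e ∈ c.support, μ e ∈ m) ∧
      φ w * (φ s * g - φ a) ^ (M + 1) = ∑ e ∈ c.support, c e * φ (μ e) := by
  classical
  haveI : m.IsMaximal := hm
  haveI hmprime : m.IsPrime := hm.isPrime
  rw [RSemi, Subring.mem_iInf] at hg
  have hg' : algebraMap B (Localization (m.primeCompl.map φ)) g ∈ localCondSubring φ m :=
    Subring.mem_comap.1 (hg ⟨m, hmprime, hreal⟩)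
  obtain ⟨y, ⟨α, rfl⟩, r, hr, heq⟩ := hg'
  obtain ⟨⟨a, s⟩, hs⟩ := IsLocalization.mk'_surjective m.primeCompl α
  dsimp only at hs
  have e1 : algebraMap B (Localization (m.primeCompl.map φ)) (φ ↑s)
      = locMap φ m (algebraMap A (Localization.AtPrime m) ↑s) := by
    rw [locMap, IsLocalization.map_eq]
  have e1a : algebraMap B (Localization (m.primeCompl.map φ)) (φ a)
      = locMap φ m (algebraMap A (Localization.AtPrime m) a) := by
    rw [locMap, IsLocalization.map_eq]
  have e2 : algebraMap A (Localization.AtPrime m) ↑s * α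
      = algebraMap A (Localization.AtPrime m) a := by
    rw [← hs, mul_comm]; exact IsLocalization.mk'_spec _ a s
  have himg : algebraMap B (Localization (m.primeCompl.map φ)) (φ ↑s * g - φ a)
      = algebraMap B (Localization (m.primeCompl.map φ)) (φ ↑s) * r := by
    rw [map_sub, map_mul, heq, mul_add, e1, ← map_mul, e2, ← e1a]
    ring
  have hrad : algebraMap B (Localization (m.primeCompl.map φ)) (φ ↑s * g - φ a)
      ∈ (⊥ : Ideal (Localization (m.primeCompl.map φ))).jacobson := by
    rw [himg]; exact Ideal.mul_mem_left _ _ hr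
  have hlocint : (locMap φ m).IsIntegral := isIntegral_localization' hφint m.primeCompl
  have hrad2 : algebraMap B (Localization (m.primeCompl.map φ)) (φ ↑s * g - φ a)
      ∈ (Ideal.map (algebraMap B (Localization (m.primeCompl.map φ)))
          (Ideal.map φ m)).radical := by
    rw [Ideal.radical_eq_sInf]
    refine Ideal.mem_sInf.2 ?_
    rintro P ⟨hle, hP⟩
    haveI := hP
    haveI : (P.comap (locMap φ m)).IsPrime := Ideal.IsPrime.comap _
    have hQ : (P.comap (locMap φ m)) = IsLocalRing.maximalIdeal (Localization.AtPrime m) := by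
      refine le_antisymm (IsLocalRing.le_maximalIdeal (Ideal.IsPrime.ne_top inferInstance)) ?_
      rw [← Localization.AtPrime.map_eq_maximalIdeal, Ideal.map_le_iff_le_comap]
      intro μ hμ
      rw [Ideal.mem_comap, Ideal.mem_comap, locMap, IsLocalization.map_eq]
      exact hle (Ideal.mem_map_of_mem _ (Ideal.mem_map_of_mem _ hμ))
    have hPmax : P.IsMaximal := by
      refine Ideal.isMaximal_of_isIntegral_of_isMaximal_comap' (locMap φ m) hlocint P ?_
      rw [hQ]; exact IsLocalRing.maximalIdeal.isMaximal _
    have hjac : (⊥ : Ideal (Localization (m.primeCompl.map φ))).jacobson ≤ P :=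
      sInf_le ⟨bot_le, hPmax⟩
    exact hjac hrad
  obtain ⟨N0, hN0⟩ := hrad2
  have hN1 : algebraMap B (Localization (m.primeCompl.map φ)) (φ ↑s * g - φ a) ^ (N0 + 1)
      ∈ Ideal.map (algebraMap B (Localization (m.primeCompl.map φ))) (Ideal.map φ m) := by
    rw [pow_succ]; exact Ideal.mul_mem_right _ _ hN0
  have hpow : algebraMap B (Localization (m.primeCompl.map φ)) ((φ ↑s * g - φ a) ^ (N0 + 1))
      ∈ Ideal.map (algebraMap B (Localization (m.primeCompl.map φ))) (Ideal.map φ m) := by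
    rw [map_pow]; exact hN1
  rw [IsLocalization.mem_map_algebraMap_iff (m.primeCompl.map φ)
    (Localization (m.primeCompl.map φ))] at hpow
  obtain ⟨⟨j, u⟩, hju⟩ := hpow
  have hzero : algebraMap B (Localization (m.primeCompl.map φ))
      ((φ ↑s * g - φ a) ^ (N0 + 1) * ↑u - ↑j) = 0 := by
    rw [map_sub, map_mul, sub_eq_zero]; exact hju
  rw [IsLocalization.map_eq_zero_iff (m.primeCompl.map φ)] at hzero
  obtain ⟨v, hv⟩ := hzero
  obtain ⟨u0, hu0, hu0e⟩ := u.2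
  obtain ⟨v0, hv0, hv0e⟩ := v.2
  have hident : φ (v0 * u0) * (φ ↑s * g - φ a) ^ (N0 + 1) = ↑v * ↑j := by
    rw [map_mul, hu0e, hv0e]
    have hv' : (↑v : B) * ((φ ↑s * g - φ a) ^ (N0 + 1) * ↑u - ↑j) = 0 := hv
    rw [mul_sub, sub_eq_zero] at hv'
    rw [← hv']; ring
  have hspan : φ (v0 * u0) * (φ ↑s * g - φ a) ^ (N0 + 1) ∈ Ideal.span (φ '' ↑m) := by
    rw [hident]; exact Ideal.mul_mem_left _ _ j.2
  obtain ⟨c, hcsupp, hcsum⟩ := Submodule.mem_span_set.1 hspan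
  refine ⟨a, ↑s, v0 * u0, N0, c,
    fun e => if hmem : e ∈ φ '' ↑m then hmem.choose else 0, s.2, ?_, ?_, ?_⟩
  · exact Submonoid.mul_mem _ hv0 hu0
  · intro e he
    have hmem : e ∈ φ '' ↑m := hcsupp he
    simp only [dif_pos hmem]
    exact hmem.choose_spec.1
  · rw [← hcsum, Finsupp.sum]
    refine Finset.sum_congr rfl fun e he => ?_
    have hmem : e ∈ φ '' ↑m := hcsupp he
    simp only [dif_pos hmem]
    rw [hmem.choose_spec.2, smul_eq_mul]

/-- Every function on `X(ℝ)` which becomes polynomial on the R-seminormalization is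
continuous for the Euclidean topology. -/
theorem continuous_of_mem_KRplus
    (n : ℕ) (I : Ideal (MvPolynomial (Fin n) ℝ)) [I.IsPrime] (hIreal : I.IsRealIdeal)
    (K : Type*) [Field K] [Algebra (CoordRing n I) K] [IsFractionRing (CoordRing n I) K]
    [Algebra ℝ K] [IsScalarTower ℝ (CoordRing n I) K]
    (f : ↥(XR n I) → ℝ) (hf : KRplus n I K f) :
    Continuous f := by
  classical
  obtain ⟨g, hg, hfg⟩ := hf
  have hφint : (algebraMap (CoordRing n I) ↥(integralClosure (CoordRing n I) K)).IsIntegral :=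
    fun b => by exact integralClosure.isIntegral (R := CoordRing n I) (A := K) b
  -- choose evaluation homomorphisms and bounds
  have hΨex := fun ξ : ↥(XR n I) => exists_psi n I K (x := ξ.1) ξ.2
  choose Ψ hΨ using hΨex
  have hCex := fun b : ↥(integralClosure (CoordRing n I) K) => psi_bound n I K b
  choose C hCc hCb using hCex
  -- value of f via Ψ
  have hfΨ : ∀ ξ : ↥(XR n I), Ψ ξ g = (f ξ : ℂ) := by
    intro ξ
    have := hfg ξ.1 ξ.2 (Ψ ξ) (hΨ ξ)
    simpa using this
  rw [continuous_iff_continuousAt]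
  intro ξ₀
  obtain ⟨a, s, w, M, c, μ, hs0, hw0, hμ0, hid⟩ :=
    key_generic (algebraMap (CoordRing n I) ↥(integralClosure (CoordRing n I) K)) (by exact hφint) g (by exact hg)
      (RingHom.ker (evR ξ₀.2)) (ker_evR_isMaximal n I ξ₀.2) (ker_evR_isReal n I ξ₀.2)
  have hs0' : evR ξ₀.2 s ≠ 0 := fun h => hs0 (RingHom.mem_ker.mpr h)
  have hw0' : evR ξ₀.2 w ≠ 0 := fun h => hw0 (RingHom.mem_ker.mpr h)
  have hμ0' : ∀ e ∈ c.support, evR ξ₀.2 (μ e) = 0 := fun e he => RingHom.mem_ker.mp (hμ0 e he)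
  -- define real auxiliary functions
  set G : ↥(XR n I) → ℝ := fun ξ => evR ξ.2 s * f ξ - evR ξ.2 a with hG
  set ρ : ↥(XR n I) → ℝ :=
    fun ξ => ∑ e ∈ c.support, C (c e) ξ * |evR ξ.2 (μ e)| with hρ
  have hρcont : Continuous ρ := by
    refine continuous_finset_sum _ fun e _ => ?_
    exact (hCc (c e)).mul (continuous_evR n I (μ e)).abs
  have hρ0 : ρ ξ₀ = 0 := by
    rw [hρ]
    refine Finset.sum_eq_zero fun e he => ?_
    rw [hμ0' e he, abs_zero, mul_zero]
  -- the fundamental bound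
  have hbound : ∀ ξ : ↥(XR n I), |evR ξ.2 w| * |G ξ| ^ (M + 1) ≤ ρ ξ := by
    intro ξ
    have hc := congrArg (Ψ ξ) hid
    rw [map_mul, map_pow, map_sub, map_mul, map_sum] at hc
    rw [hΨ ξ w, hΨ ξ s, hΨ ξ a, hfΨ ξ] at hc
    have hGc : ((evR ξ.2 s : ℂ) * (f ξ : ℂ) - (evR ξ.2 a : ℂ)) = ((G ξ : ℝ) : ℂ) := by
      rw [hG]; push_cast; ring
    rw [hGc] at hc
    have hnorm := congrArg Norm.norm hc
    rw [norm_mul, norm_pow] at hnorm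
    have hL : ‖((evR ξ.2 w : ℝ) : ℂ)‖ = |evR ξ.2 w| := by
      rw [Complex.norm_real, Real.norm_eq_abs]
    have hL2 : ‖(((G ξ : ℝ)) : ℂ)‖ = |G ξ| := by
      rw [Complex.norm_real, Real.norm_eq_abs]
    rw [hL, hL2] at hnorm
    rw [hnorm]
    refine le_trans (norm_sum_le _ _) ?_
    refine Finset.sum_le_sum fun e he => ?_
    rw [map_mul, norm_mul, hΨ ξ (μ e), Complex.norm_real, Real.norm_eq_abs]
    refine mul_le_mul_of_nonneg_right ?_ (abs_nonneg _)
    have := hCb (c e) ξ.1 ξ.2 (Ψ ξ) (hΨ ξ)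
    simpa using this
  -- G ξ₀ = 0
  have hG0 : G ξ₀ = 0 := by
    have h1 := hbound ξ₀
    rw [hρ0] at h1
    have h2 : |G ξ₀| ^ (M + 1) = 0 := by
      by_contra h3
      have h4 : 0 < |G ξ₀| ^ (M + 1) :=
        lt_of_le_of_ne (pow_nonneg (abs_nonneg _) _) (Ne.symm h3)
      have h5 : 0 < |evR ξ₀.2 w| := abs_pos.mpr hw0'
      nlinarith
    have := pow_eq_zero_iff (Nat.succ_ne_zero M) |>.1 h2
    exact abs_eq_zero.mp this
  -- G tends to 0
  have hGtend : Filter.Tendsto G (nhds ξ₀) (nhds 0) := by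
    rw [NormedAddCommGroup.tendsto_nhds_zero]
    intro ε hε
    set ε' := min ε 1 with hε'
    have hε'pos : 0 < ε' := lt_min hε one_pos
    have hwpos : 0 < |evR ξ₀.2 w| := abs_pos.mpr hw0'
    have hwcont : Continuous fun ξ : ↥(XR n I) => |evR ξ.2 w| := (continuous_evR n I w).abs
    have hEv2 : ∀ᶠ ξ in nhds ξ₀, |evR ξ₀.2 w| / 2 < |evR ξ.2 w| := by
      have : Filter.Tendsto (fun ξ : ↥(XR n I) => |evR ξ.2 w|) (nhds ξ₀)
          (nhds (|evR ξ₀.2 w|)) := hwcont.continuousAt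
      exact this.eventually_const_lt (by linarith)
    have hEv1 : ∀ᶠ ξ in nhds ξ₀, ρ ξ < ε' ^ (M + 1) * (|evR ξ₀.2 w| / 2) := by
      have : Filter.Tendsto ρ (nhds ξ₀) (nhds (ρ ξ₀)) := hρcont.continuousAt
      rw [hρ0] at this
      exact this.eventually_lt_const (by positivity)
    filter_upwards [hEv1, hEv2] with ξ h1 h2
    have hb := hbound ξ
    have h6 : |G ξ| ^ (M + 1) < ε' ^ (M + 1) := by
      by_contra h7
      push_neg at h7
      have h8 : ε' ^ (M + 1) * (|evR ξ₀.2 w| / 2) < |evR ξ.2 w| * |G ξ| ^ (M + 1) := by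
        calc ε' ^ (M + 1) * (|evR ξ₀.2 w| / 2)
            < ε' ^ (M + 1) * |evR ξ.2 w| := by
              refine mul_lt_mul_of_pos_left h2 (by positivity)
          _ ≤ |G ξ| ^ (M + 1) * |evR ξ.2 w| := by
              refine mul_le_mul_of_nonneg_right h7 (abs_nonneg _)
          _ = |evR ξ.2 w| * |G ξ| ^ (M + 1) := by ring
      linarith
    have h9 : |G ξ| < ε' := by
      by_contra h10
      push_neg at h10
      exact absurd h6 (not_lt.mpr (pow_le_pow_left₀ (le_of_lt hε'pos) h10 _))
    calc ‖G ξ‖ = |G ξ| := Real.norm_eq_abs _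
      _ < ε' := h9
      _ ≤ ε := min_le_left _ _
  -- assemble continuity
  have hscont : Filter.Tendsto (fun ξ : ↥(XR n I) => evR ξ.2 s) (nhds ξ₀)
      (nhds (evR ξ₀.2 s)) := (continuous_evR n I s).continuousAt
  have hacont : Filter.Tendsto (fun ξ : ↥(XR n I) => evR ξ.2 a) (nhds ξ₀)
      (nhds (evR ξ₀.2 a)) := (continuous_evR n I a).continuousAt
  have hquot : Filter.Tendsto (fun ξ : ↥(XR n I) => (evR ξ.2 a + G ξ) / evR ξ.2 s) (nhds ξ₀)
      (nhds ((evR ξ₀.2 a + 0) / evR ξ₀.2 s)) :=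
    Filter.Tendsto.div (hacont.add hGtend) hscont hs0'
  have hG0' : evR ξ₀.2 s * f ξ₀ - evR ξ₀.2 a = 0 := hG0
  have hfval : f ξ₀ = (evR ξ₀.2 a + 0) / evR ξ₀.2 s := by
    rw [add_zero, eq_div_iff hs0']
    linear_combination hG0'
  have hev : ∀ᶠ ξ in nhds ξ₀, (evR ξ.2 a + G ξ) / evR ξ.2 s = f ξ := by
    have : ∀ᶠ ξ in nhds ξ₀, evR ξ.2 s ≠ 0 :=
      (continuous_evR n I s).continuousAt.eventually_ne hs0'
    filter_upwards [this] with ξ hξ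
    show (evR ξ.2 a + (evR ξ.2 s * f ξ - evR ξ.2 a)) / evR ξ.2 s = f ξ
    rw [div_eq_iff hξ]
    ring
  have : Filter.Tendsto f (nhds ξ₀) (nhds ((evR ξ₀.2 a + 0) / evR ξ₀.2 s)) :=
    hquot.congr' (by filter_upwards [hev] with ξ hξ using hξ)
  rw [← hfval] at this
  exact this
end

section
/- Let X be an irreducible real affine variety with coordinate ring A = ℝ[x_1,...,x_n]/I, I a real prime ideal, let f ∈ K^{R+}(X(ℝ)), and let p be a real prime ideal of A defining a real subvariety V of X, with V(ℝ) = { x ∈ X(ℝ) : b(x) = 0 for all b ∈ p }. Then the restriction of f to V(ℝ) is rational: there exist a, b ∈ A with b ∉ p such that f(x)·b(x) = a(x) for every x ∈ V(ℝ) with b(x) ≠ 0, i.e. f|_{V(ℝ)} agrees with a rational function of V on the nonvanishing locus of b. -/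
variable {A B : Type*} [CommRing A] [CommRing B]

set_option synthInstance.maxHeartbeats 1000000

/-!
Let `g ∈ A^{R+}` represent `f`. Since `p` is real, the defining condition of `A^{R+}` at `p`
gives `a, s ∈ A` with `s ∉ p` and `s·g - a` in the Jacobson radical of `A'_p`, hence in some
prime `q` of `A'` with `q ∩ A ⊆ p`. For a real point `x ∈ V(ℝ)` we have `p ⊆ ker ev_x`, so by
going up there is a prime `q' ⊇ q` of `A'` over `ker ev_x`; the residue field of `q'` is
algebraic over `ℝ` and embeds into `ℂ`, giving `ψ : A' → ℂ` over `ev_x` killing `s·g - a`.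
Then `f(x)·s(x) = ψ(s·g) = ψ(a) = a(x)`.
-/

open Function

lemma exists_mul_sub_mem_jacobson_of_mem_RSemi {φ : A →+* B} {g : B} (hg : g ∈ RSemi φ)
    {p : Ideal A} [p.IsPrime] (hpreal : p.IsRealIdeal) :
    ∃ a s : A, s ∉ p ∧ algebraMap B (Localization (p.primeCompl.map φ)) (φ s * g - φ a) ∈
      (⊥ : Ideal (Localization (p.primeCompl.map φ))).jacobson := by
  have hloc := Subring.mem_comap.mp (Subring.mem_iInf.mp hg ⟨p, ‹_›, hpreal⟩)
  obtain ⟨_, ⟨α, rfl⟩, r, hr, hgr⟩ := hloc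
  obtain ⟨⟨a, s⟩, rfl⟩ := IsLocalization.mk'_surjective p.primeCompl α
  refine ⟨a, s, s.2, ?_⟩
  let s' : p.primeCompl.map φ := ⟨φ s, Submonoid.mem_map_of_mem φ s.2⟩
  have hspec := IsLocalization.mk'_spec (Localization (p.primeCompl.map φ)) (φ a) s'
  have hmap : locMap φ p (IsLocalization.mk' _ a s) = IsLocalization.mk' _ (φ a) s' :=
    IsLocalization.map_mk' _ a s
  have hdiff : algebraMap B (Localization (p.primeCompl.map φ)) (φ s * g - φ a) =
      algebraMap B _ (φ s) * r := by
    rw [map_sub, map_mul, hgr, hmap, ← hspec]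
    ring
  exact hdiff ▸ Ideal.mul_mem_left _ _ hr

lemma exists_isPrime_disjoint_of_algebraMap_mem_jacobson {M : Submonoid B} {S : Type*}
    [CommRing S] [Nontrivial S] [Algebra B S] [IsLocalization M S] {y : B}
    (hy : algebraMap B S y ∈ (⊥ : Ideal S).jacobson) :
    ∃ q : Ideal B, q.IsPrime ∧ Disjoint (M : Set B) q ∧ y ∈ q := by
  obtain ⟨Q, hQ⟩ := Ideal.exists_maximal S
  obtain ⟨hprime, hdisj⟩ := (IsLocalization.isPrime_iff_isPrime_disjoint M S Q).mp hQ.isPrime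
  exact ⟨Q.under B, hprime, hdisj, Ideal.mem_sInf.mp hy ⟨bot_le, hQ⟩⟩

lemma RSemi.exists_isPrime_mul_sub_mem [IsDomain B] {φ : A →+* B} (hφ : Injective φ) {g : B}
    (hg : g ∈ RSemi φ) {p : Ideal A} [p.IsPrime] (hpreal : p.IsRealIdeal) :
    ∃ a s : A, s ∉ p ∧ ∃ q : Ideal B, q.IsPrime ∧ q.comap φ ≤ p ∧ φ s * g - φ a ∈ q := by
  obtain ⟨a, s, hs, hmem⟩ := exists_mul_sub_mem_jacobson_of_mem_RSemi hg hpreal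
  have hM : p.primeCompl.map φ ≤ nonZeroDivisors B := by
    rintro _ ⟨t, ht, rfl⟩
    exact mem_nonZeroDivisors_of_ne_zero
      ((map_ne_zero_iff φ hφ).mpr fun h0 => ht (h0 ▸ p.zero_mem))
  have : Nontrivial (Localization (p.primeCompl.map φ)) :=
    (IsLocalization.injective (Localization (p.primeCompl.map φ)) hM).nontrivial
  obtain ⟨q, hq, hdisj, hsg⟩ :=
    exists_isPrime_disjoint_of_algebraMap_mem_jacobson (M := p.primeCompl.map φ) hmem
  refine ⟨a, s, hs, q, hq, fun t ht => ?_, hsg⟩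
  by_contra htp
  exact Set.disjoint_left.mp hdisj (Submonoid.mem_map_of_mem φ htp) ht

lemma exists_algHom_complex_of_comap_le_ker [Algebra ℝ A] [Algebra ℝ B] [Algebra A B]
    [IsScalarTower ℝ A B] [Algebra.IsIntegral A B] (ev : A →+* ℝ) {q : Ideal B} [q.IsPrime]
    (hq : q.comap (algebraMap A B) ≤ RingHom.ker ev) :
    ∃ ψ : B →ₐ[ℝ] ℂ, (∀ b ∈ q, ψ b = 0) ∧ ∀ c : A, ψ (algebraMap A B c) = ev c := by
  have := RingHom.ker_isPrime ev
  obtain ⟨q', hqq', _, hq'⟩ := Ideal.exists_ideal_over_prime_of_isIntegral (RingHom.ker ev) q hq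
  -- every ring endomorphism of `ℝ` is the identity, so `ev` is `ℝ`-linear
  have hev : ∀ t : ℝ, ev (algebraMap ℝ A t) = t := fun t =>
    DFunLike.congr_fun (Subsingleton.elim (ev.comp (algebraMap ℝ A)) (RingHom.id ℝ)) t
  have hcomp : (Ideal.Quotient.mk q').comp (algebraMap A B) = (algebraMap ℝ (B ⧸ q')).comp ev := by
    ext c
    rw [RingHom.comp_apply, RingHom.comp_apply, IsScalarTower.algebraMap_apply ℝ A (B ⧸ q'),
      IsScalarTower.algebraMap_apply A B (B ⧸ q'), Ideal.Quotient.algebraMap_eq,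
      Ideal.Quotient.mk_eq_mk_iff_sub_mem, ← map_sub, ← Ideal.mem_comap, hq', RingHom.mem_ker,
      map_sub, hev, sub_self]
  have : Algebra.IsAlgebraic ℝ (B ⧸ q') := by
    refine ⟨fun y => ?_⟩
    obtain ⟨b, rfl⟩ := Ideal.Quotient.mk_surjective y
    obtain ⟨P, hPm, hP⟩ := Algebra.IsIntegral.isIntegral (R := A) b
    refine IsIntegral.isAlgebraic ⟨P.map ev, hPm.map _, ?_⟩
    rw [Polynomial.eval₂_map, ← hcomp, ← Polynomial.hom_eval₂, hP, map_zero]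
  let L : (B ⧸ q') →ₐ[ℝ] ℂ := IsAlgClosed.lift
  refine ⟨L.comp (Ideal.Quotient.mkₐ ℝ q'), fun b hb => ?_, fun c => ?_⟩
  · rw [AlgHom.comp_apply, Ideal.Quotient.mkₐ_eq_mk,
      Ideal.Quotient.eq_zero_iff_mem.mpr (hqq' hb), map_zero]
  · rw [AlgHom.comp_apply, Ideal.Quotient.mkₐ_eq_mk, ← RingHom.comp_apply, hcomp,
      RingHom.comp_apply, AlgHom.commutes, Complex.coe_algebraMap]

theorem KRplus_restriction_rational_general
    (n : ℕ) (I : Ideal (MvPolynomial (Fin n) ℝ))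
    (K : Type*) [Field K] [Algebra (CoordRing n I) K] [IsFractionRing (CoordRing n I) K]
    [Algebra ℝ K] [IsScalarTower ℝ (CoordRing n I) K]
    (f : ↥(XR n I) → ℝ) (hf : KRplus n I K f)
    (p : Ideal (CoordRing n I)) (hp : p.IsPrime) (hpreal : p.IsRealIdeal) :
    ∃ a b : CoordRing n I, b ∉ p ∧
      ∀ (x : Fin n → ℝ) (hx : x ∈ XR n I),
        (∀ c ∈ p, evR hx c = 0) →  -- `x ∈ V(ℝ)`
        evR hx b ≠ 0 →
        f ⟨x, hx⟩ * evR hx b = evR hx a := by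
  set B := integralClosure (CoordRing n I) K
  obtain ⟨g, hg, hgf⟩ := hf
  have hinj : Injective (algebraMap (CoordRing n I) B) := fun c d hcd =>
    IsFractionRing.injective (CoordRing n I) K (by
      rw [IsScalarTower.algebraMap_apply _ B K, hcd, ← IsScalarTower.algebraMap_apply])
  obtain ⟨a, s, hs, q, _, hqp, hsga⟩ := RSemi.exists_isPrime_mul_sub_mem hinj hg hpreal
  refine ⟨a, s, hs, fun x hx hxV _ => ?_⟩
  obtain ⟨ψ, hψq, hψev⟩ := exists_algHom_complex_of_comap_le_ker (evR hx)
    (hqp.trans fun c hc => RingHom.mem_ker.mpr (hxV c hc))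
  have hψ := hψq _ hsga
  rw [map_sub, map_mul, hψev, hψev, hgf x hx ψ hψev] at hψ
  rw [mul_comm]
  exact_mod_cast sub_eq_zero.mp hψ

/-- If `f ∈ K^{R+}(X(ℝ))` and `V ⊆ X` is the real subvariety defined by a real prime ideal
`p` of the coordinate ring, then the restriction of `f` to `V(ℝ)` is rational: there are
`a b` in the coordinate ring with `b ∉ p` such that `f·b = a` on the nonvanishing locus of
`b` in `V(ℝ)`. -/
theorem KRplus_restriction_rational
    (n : ℕ) (I : Ideal (MvPolynomial (Fin n) ℝ)) [I.IsPrime] (hIreal : I.IsRealIdeal)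
    (K : Type*) [Field K] [Algebra (CoordRing n I) K] [IsFractionRing (CoordRing n I) K]
    [Algebra ℝ K] [IsScalarTower ℝ (CoordRing n I) K]
    (f : ↥(XR n I) → ℝ) (hf : KRplus n I K f)
    (p : Ideal (CoordRing n I)) (hp : p.IsPrime) (hpreal : p.IsRealIdeal) :
    ∃ a b : CoordRing n I, b ∉ p ∧
      ∀ (x : Fin n → ℝ) (hx : x ∈ XR n I),
        (∀ c ∈ p, evR hx c = 0) →  -- `x ∈ V(ℝ)`
        evR hx b ≠ 0 →
        f ⟨x, hx⟩ * evR hx b = evR hx a :=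
  KRplus_restriction_rational_general n I K f hf p hp hpreal
end
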